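/- arXiv:1904.03637 — 9 statements merged into one kernel-verified Lean document; each statement's English description precedes it below -/
import Mathlib

section
/- Let A be a countable well-ordered set with finite big Ramsey degrees, and fix integers n ≥ 1, m ≥ 1. For every subset τ ⊆ m with |τ| ≤ n, every k ≥ 2 and every coloring χ of the embeddings f : n ↪ A + m whose additive type is τ, there is a subset U ⊆ A order-isomorphic to A such that χ attains at most T(n − |τ|, A) colors on embeddings n ↪ U + m of additive type τ (with T(0, A) = 1 by convention). -/
open Set

/-- The big Ramsey degree of the `n`-element chain in the chain `C` is at most `t`:
for every `k ≥ 2` and every `k`-coloring of the `n`-element subchains of `C`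
(identified with order-embeddings `Fin n ↪o C`) there is a subset `U ⊆ C`
order-isomorphic to `C` on which the coloring attains at most `t` values. -/
def brdLE (C : Type*) [LinearOrder C] (n t : ℕ) : Prop :=
  ∀ k : ℕ, 2 ≤ k → ∀ χ : (Fin n ↪o C) → Fin k,
    ∃ U : Set C, Nonempty (U ≃o C) ∧ (χ '' {f | ∀ i, f i ∈ U}).ncard ≤ t

/-- `T(n, C) = t`: `t` is the least natural number with `brdLE C n t`. -/
def hasBRD (C : Type*) [LinearOrder C] (n t : ℕ) : Prop :=
  brdLE C n t ∧ ∀ s : ℕ, brdLE C n s → t ≤ s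

/-- `C` has finite big Ramsey degrees: `T(n, C) < ∞` for every `n ≥ 1`. -/
def finiteBRD (C : Type*) [LinearOrder C] : Prop :=
  ∀ n : ℕ, 1 ≤ n → ∃ t : ℕ, brdLE C n t


/-- The additive type of an embedding `f : n ↪ A + m` (with `A + m` realized as `A ⊕ₗ Fin m`):
the set of positions in the appended `m`-part hit by `f`. -/
def addTp {A : Type*} [LinearOrder A] {n m : ℕ} (f : Fin n ↪o (A ⊕ₗ Fin m)) : Set (Fin m) :=
  {j | ∃ i, f i = toLex (Sum.inr j)}

/-!
An embedding `n ↪ A + m` of additive type `τ` sends its last `|τ|` points, in order, onto `τ`,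
so it is the same thing as an arbitrary embedding of its first `n - |τ|` points into `A`.
A coloring of the embeddings of type `τ` is therefore a coloring of the `(n - |τ|)`-element
subchains of `A`, and the big Ramsey degree `T(n - |τ|, A)` bounds it on a copy of `A`
(when `n = |τ|` there is a single embedding, whence the convention `T(0, A) = 1`).
-/

theorem Fin.strictMono_append {α : Type*} [Preorder α] {s r : ℕ} {u : Fin s → α} {v : Fin r → α}
    (hu : StrictMono u) (hv : StrictMono v) (huv : ∀ i j, u i < v j) :
    StrictMono (Fin.append u v) := by
  intro i i' h
  cases i using Fin.addCases with
  | left i =>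
    cases i' using Fin.addCases with
    | left i' => simpa using hu ((Fin.strictMono_castAdd r).lt_iff_lt.1 h)
    | right j' => simpa using huv i j'
  | right j =>
    cases i' using Fin.addCases with
    | left i' =>
      have := Fin.lt_def.1 h
      simp only [Fin.val_natAdd, Fin.val_castAdd] at this
      omega
    | right j' => simpa using hv ((Fin.natAdd_lt_natAdd_iff s).1 h)

theorem Fin.range_append {α : Type*} {s r : ℕ} (u : Fin s → α) (v : Fin r → α) :
    range (Fin.append u v) = range u ∪ range v := by
  ext x
  constructor
  · rintro ⟨i, rfl⟩
    cases i using Fin.addCases <;> simp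
  · rintro (⟨i, rfl⟩ | ⟨j, rfl⟩)
    · exact ⟨Fin.castAdd r i, Fin.append_left u v i⟩
    · exact ⟨Fin.natAdd s j, Fin.append_right u v j⟩

theorem Set.Finite.exists_orderEmbedding_fin_range_eq {α : Type*} [LinearOrder α] {X : Set α}
    (hX : X.Finite) {k : ℕ} (hk : X.ncard = k) : ∃ g : Fin k ↪o α, range g = X :=
  ⟨hX.toFinset.orderEmbOfFin (by rwa [← ncard_eq_toFinset_card X hX]), by simp⟩

theorem brdLE_zero_one (C : Type*) [LinearOrder C] : brdLE C 0 1 := by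
  intro k _ χ
  refine ⟨univ, ⟨OrderIso.Set.univ⟩, ?_⟩
  rw [ncard_le_one (toFinite _)]
  rintro _ ⟨f, -, rfl⟩ _ ⟨g, -, rfl⟩
  rw [(RelEmbedding.ext (fun i : Fin 0 => i.elim0) : f = g)]

theorem ncard_image_inl_union_image_inr {A B : Type*} {X : Set A} {Y : Set B} (hX : X.Finite) (hY : Y.Finite) :
    ((fun a => toLex (Sum.inl a)) '' X ∪ (fun b => toLex (Sum.inr b)) '' Y : Set (A ⊕ₗ B)).ncard =
      X.ncard + Y.ncard := by
  rw [ncard_union_eq _ (hX.image _) (hY.image _),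
    ncard_image_of_injective _ (fun _ _ h => by simpa using h),
    ncard_image_of_injective _ (fun _ _ h => by simpa using h)]
  exact disjoint_left.2 (by rintro _ ⟨a, -, rfl⟩ ⟨b, -, h⟩; simp at h)

section SumLex

variable {A B : Type*} [LinearOrder A] [LinearOrder B] {s r : ℕ}

def appendEmb (g : Fin s ↪o A) (σ : Fin r ↪o B) : Fin (s + r) ↪o A ⊕ₗ B :=
  OrderEmbedding.ofStrictMono
    (Fin.append (fun i => toLex (Sum.inl (g i))) (fun j => toLex (Sum.inr (σ j))))
    (Fin.strictMono_append (fun _ _ h => Sum.Lex.inl_lt_inl_iff.2 (g.strictMono h))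
      (fun _ _ h => Sum.Lex.inr_lt_inr_iff.2 (σ.strictMono h)) (fun _ _ => Sum.Lex.inl_lt_inr _ _))

theorem appendEmb_castAdd (g : Fin s ↪o A) (σ : Fin r ↪o B) (i : Fin s) :
    appendEmb g σ (Fin.castAdd r i) = toLex (Sum.inl (g i)) := by
  simp [appendEmb]

theorem range_appendEmb (g : Fin s ↪o A) (σ : Fin r ↪o B) :
    range (appendEmb g σ) =
      (fun a => toLex (Sum.inl a)) '' range g ∪ (fun b => toLex (Sum.inr b)) '' range σ := by
  rw [← range_comp, ← range_comp, appendEmb, OrderEmbedding.coe_ofStrictMono, Fin.range_append]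
  rfl

end SumLex

section AddTp

variable {A : Type*} [LinearOrder A] {m s r : ℕ}

theorem addTp_appendEmb (g : Fin s ↪o A) (σ : Fin r ↪o Fin m) :
    addTp (appendEmb g σ) = range σ := by
  ext j
  change toLex (Sum.inr j) ∈ range (appendEmb g σ) ↔ _
  rw [range_appendEmb]
  simp

theorem exists_appendEmb_eq_of_addTp_eq (σ : Fin r ↪o Fin m) (f : Fin (s + r) ↪o A ⊕ₗ Fin m)
    (hf : addTp f = range σ) : ∃ g : Fin s ↪o A, appendEmb g σ = f := by
  set X : Set A := (fun a => toLex (Sum.inl a)) ⁻¹' range f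
  have hX : X.Finite := (finite_range f).preimage (fun _ _ _ _ h => by simpa using h)
  have hsplit : range f =
      (fun a => toLex (Sum.inl a)) '' X ∪ (fun b => toLex (Sum.inr b)) '' range σ := by
    rw [← hf]
    ext x
    obtain ⟨a | b, rfl⟩ := toLex.surjective x <;> simp [X, addTp]
  have hcard : X.ncard = s := by
    have := congrArg ncard hsplit
    rwa [ncard_range_of_injective f.injective, ncard_image_inl_union_image_inr hX (toFinite _),
      ncard_range_of_injective σ.injective, Nat.card_fin, Nat.card_fin, Nat.add_right_cancel_iff,
      eq_comm] at this
  obtain ⟨g, hg⟩ := hX.exists_orderEmbedding_fin_range_eq hcard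
  exact ⟨g, OrderEmbedding.range_inj.1 (by rw [range_appendEmb, hg, hsplit])⟩

end AddTp

theorem stmt3_general {A : Type*} [LinearOrder A]
    (T : ℕ → ℕ) (hT0 : T 0 = 1) (hT : ∀ j : ℕ, 1 ≤ j → hasBRD A j (T j))
    (n m : ℕ)
    (τ : Set (Fin m)) (hτ : τ.ncard ≤ n)
    (k : ℕ) (hk : 2 ≤ k)
    (χ : {f : Fin n ↪o (A ⊕ₗ Fin m) // addTp f = τ} → Fin k) :
    ∃ U : Set A, Nonempty (U ≃o A) ∧
      (χ '' {f | ∀ i : Fin n, ∀ a : A, f.1 i = toLex (Sum.inl a) → a ∈ U}).ncard ≤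
        T (n - τ.ncard) := by
  obtain ⟨s, rfl⟩ := Nat.exists_eq_add_of_le' hτ
  obtain ⟨σ, hσ⟩ := (toFinite τ).exists_orderEmbedding_fin_range_eq rfl
  let Φ (g : Fin s ↪o A) : {f // addTp f = τ} := ⟨appendEmb g σ, (addTp_appendEmb g σ).trans hσ⟩
  have hbrd : brdLE A s (T s) := by
    rcases Nat.eq_zero_or_pos s with rfl | hs
    · exact hT0 ▸ brdLE_zero_one A
    · exact (hT s hs).1
  obtain ⟨U, hU, hcard⟩ := hbrd k hk (χ ∘ Φ)
  refine ⟨U, hU, ?_⟩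
  rw [Nat.add_sub_cancel]
  refine (ncard_le_ncard ?_ (toFinite _)).trans hcard
  rintro _ ⟨f, hfU, rfl⟩
  obtain ⟨g, hg⟩ := exists_appendEmb_eq_of_addTp_eq σ f.1 (f.2.trans hσ.symm)
  refine ⟨g, fun i => hfU (Fin.castAdd _ i) (g i) ?_, congrArg χ (Subtype.ext hg)⟩
  rw [← hg, appendEmb_castAdd]

/-- Lemma on one additive type: for a countable well-ordered `A` with finite big Ramsey
degrees (with `T j = T(j, A)` for `j ≥ 1` and `T 0 = 1` by convention), any finite coloring of
the embeddings `n ↪ A + m` of additive type `τ` admits a `U ⊆ A` order-isomorphic to `A`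
such that at most `T (n - |τ|)` colors occur on embeddings `n ↪ U + m` of type `τ`. -/
theorem stmt3 {A : Type*} [LinearOrder A] [WellFoundedLT A] [Countable A]
    (T : ℕ → ℕ) (hT0 : T 0 = 1) (hT : ∀ j : ℕ, 1 ≤ j → hasBRD A j (T j))
    (n m : ℕ) (hn : 1 ≤ n) (hm : 1 ≤ m)
    (τ : Set (Fin m)) (hτ : τ.ncard ≤ n)
    (k : ℕ) (hk : 2 ≤ k)
    (χ : {f : Fin n ↪o (A ⊕ₗ Fin m) // addTp f = τ} → Fin k) :
    ∃ U : Set A, Nonempty (U ≃o A) ∧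
      (χ '' {f | ∀ i : Fin n, ∀ a : A, f.1 i = toLex (Sum.inl a) → a ∈ U}).ncard ≤
        T (n - τ.ncard) :=
  stmt3_general T hT0 hT n m τ hτ k hk χ
end

section
/- Let α be a countable ordinal with finite big Ramsey degrees and m ≥ 1 an integer. Then α + m has finite big Ramsey degrees; more precisely, T(n, α + m) ≤ Σ_{j=0}^{n} C(m, j) · T(n − j, α), where T(0, α) = 1 and C(m, j) = 0 for m < j. -/
open Set

/-! Split an `n`-element subset of `α + m` into its part below `α`, of size `n - j`, and a
`j`-element subset `s` of the top block of `m` points. Colouring each `(n - j)`-subset `P` of `α`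
by the colour of `P ∪ s` gives finitely many colourings of `α`; composing copies, one copy of `α`
is good for all of them at once, with at most `T(n - j, α)` colours for each `s`. That copy
followed by the whole top block is a copy of `α + m`, on which at most
`∑ j, C(m, j) · T(n - j, α)` colours remain. -/

section Copies

variable {A C D : Type*} [LinearOrder A] [LinearOrder C] [LinearOrder D]

/-- Copies of a chain are handled as ranges of order embeddings and `n`-element subchains as
`n`-element finsets: these are the colours of the `n`-subsets of `range e`. -/
def colorsOn {κ : Type*} (χ : Finset D → κ) (e : C ↪o D) (n : ℕ) : Set κ :=
  (fun S : Finset C => χ (S.map e.toEmbedding)) '' {S | S.card = n}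

lemma colorsOn_trans {κ : Type*} (χ : Finset D → κ) (f : A ↪o C) (e : C ↪o D) (n : ℕ) :
    colorsOn χ (f.trans e) n = colorsOn (fun S => χ (S.map e.toEmbedding)) f n := by
  simp only [colorsOn, Finset.map_map]
  rfl

lemma colorsOn_trans_subset {κ : Type*} (χ : Finset D → κ) (f : A ↪o C) (e : C ↪o D)
    (n : ℕ) : colorsOn χ (f.trans e) n ⊆ colorsOn χ e n := by
  rw [colorsOn_trans]
  rintro _ ⟨S, hS, rfl⟩
  exact ⟨S.map f.toEmbedding, by simpa using hS, rfl⟩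

lemma colorsOn_eq_image {κ : Type*} (χ : Finset D → κ) (e : C ↪o D) (n : ℕ) :
    colorsOn χ e n =
      (fun f : Fin n ↪o D => χ (Finset.univ.map f.toEmbedding)) '' {f | ∀ i, f i ∈ range e} := by
  have hsets : (fun f : Fin n ↪o D => Finset.univ.map f.toEmbedding) '' {f | ∀ i, f i ∈ range e} =
      (fun S : Finset C => S.map e.toEmbedding) '' {S | S.card = n} := by
    ext S'
    constructor
    · rintro ⟨f, hf, rfl⟩
      choose g hg using hf
      have hg_mono : StrictMono g := fun i j hij =>
        e.lt_iff_lt.1 (by simpa only [hg] using f.strictMono hij)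
      refine ⟨Finset.univ.map (OrderEmbedding.ofStrictMono g hg_mono).toEmbedding, by simp, ?_⟩
      ext
      simp [hg]
    · rintro ⟨S, hS, rfl⟩
      refine ⟨(S.map e.toEmbedding).orderEmbOfFin (by simpa using hS), fun i => ?_,
        Finset.map_orderEmbOfFin_univ _ _⟩
      obtain ⟨c, -, hc⟩ := Finset.mem_map.1 ((S.map e.toEmbedding).orderEmbOfFin_mem _ i)
      exact ⟨c, hc⟩
  rw [colorsOn, ← image_image χ, ← hsets, image_image]

theorem brdLE_iff_colorsOn {n t : ℕ} :
    brdLE C n t ↔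
      ∀ k, 2 ≤ k → ∀ χ : Finset C → Fin k, ∃ e : C ↪o C, (colorsOn χ e n).ncard ≤ t := by
  constructor
  · intro h k hk χ
    obtain ⟨U, ⟨φ⟩, hU⟩ := h k hk fun f => χ (Finset.univ.map f.toEmbedding)
    let e : C ↪o C := φ.symm.toOrderEmbedding.trans (OrderEmbedding.subtype (· ∈ U))
    have he : range e = U := by
      change range (Subtype.val ∘ φ.symm) = U
      rw [φ.symm.surjective.range_comp, Subtype.range_coe]
    exact ⟨e, by rwa [colorsOn_eq_image, he]⟩
  · intro h k hk χ
    let χ' : Finset C → Fin k := fun S =>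
      if hS : S.card = n then χ (S.orderEmbOfFin hS) else ⟨0, by omega⟩
    have hχ' : ∀ f : Fin n ↪o C, χ' (Finset.univ.map f.toEmbedding) = χ f := by
      intro f
      simp only [χ', Finset.card_map, Finset.card_univ, Fintype.card_fin, dif_pos]
      rw [← Finset.orderEmbOfFin_unique' (f := f) _ fun i => by simp]
    obtain ⟨e, he⟩ := h k hk χ'
    refine ⟨range e, ⟨e.orderIso.symm⟩, ?_⟩
    simpa only [colorsOn_eq_image, hχ'] using he

theorem brdLE_zero : brdLE C 0 1 := by
  intro k hk χ
  refine ⟨univ, ⟨OrderIso.Set.univ⟩, (ncard_le_one_iff (toFinite _)).2 ?_⟩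
  rintro _ _ ⟨f, -, rfl⟩ ⟨g, -, rfl⟩
  congr 1
  ext i
  exact i.elim0

theorem brdLE.of_orderIso {n t : ℕ} (h : brdLE C n t) (φ : C ≃o D) : brdLE D n t := by
  rw [brdLE_iff_colorsOn] at h ⊢
  intro k hk χ
  obtain ⟨e, he⟩ := h k hk fun S => χ (S.map φ.toOrderEmbedding.toEmbedding)
  refine ⟨(φ.symm.toOrderEmbedding.trans e).trans φ.toOrderEmbedding,
    (ncard_le_ncard ?_ (toFinite _)).trans he⟩
  rw [colorsOn_trans]
  exact colorsOn_trans_subset _ _ _ _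

theorem exists_colorsOn_ncard_le {ι : Type*} {k : ℕ} (hk : 2 ≤ k) {n t : ι → ℕ} (F : Finset ι)
    (h : ∀ i ∈ F, brdLE C (n i) (t i)) (χ : ι → Finset C → Fin k) :
    ∃ e : C ↪o C, ∀ i ∈ F, (colorsOn (χ i) e (n i)).ncard ≤ t i := by
  induction F using Finset.cons_induction generalizing χ with
  | empty => exact ⟨(OrderIso.refl C).toOrderEmbedding, by simp⟩
  | cons i₀ F _ ih =>
    rw [Finset.forall_mem_cons] at h
    obtain ⟨e₁, he₁⟩ := brdLE_iff_colorsOn.1 h.1 k hk (χ i₀)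
    obtain ⟨e₂, he₂⟩ := ih h.2 fun i S => χ i (S.map e₁.toEmbedding)
    refine ⟨e₂.trans e₁, (Finset.forall_mem_cons _ _).2 ⟨?_, fun i hi => ?_⟩⟩
    · exact (ncard_le_ncard (colorsOn_trans_subset _ _ _ _) (toFinite _)).trans he₁
    · rw [colorsOn_trans]
      exact he₂ i hi

end Copies

section SumLex

variable {α β γ δ : Type*}

def OrderEmbedding.sumLexMap [LinearOrder α] [LinearOrder β] [LinearOrder γ] [LinearOrder δ]
    (f : α ↪o β) (g : γ ↪o δ) : α ⊕ₗ γ ↪o β ⊕ₗ δ :=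
  OrderEmbedding.ofStrictMono (fun x => toLex (Sum.map f g (ofLex x))) fun _ _ h =>
    Sum.Lex.lt_def.2 ((f.ltEmbedding.sumLexMap g.ltEmbedding).map_rel_iff.2 (Sum.Lex.lt_def.1 h))

@[simp]
lemma OrderEmbedding.sumLexMap_toLex [LinearOrder α] [LinearOrder β] [LinearOrder γ]
    [LinearOrder δ] (f : α ↪o β) (g : γ ↪o δ) (x : α ⊕ γ) :
    f.sumLexMap g (toLex x) = toLex (Sum.map f g x) :=
  rfl

def Finset.lexDisjSum (P : Finset α) (s : Finset β) : Finset (α ⊕ₗ β) :=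
  (P.disjSum s).map toLex.toEmbedding

lemma Finset.card_lexDisjSum (P : Finset α) (s : Finset β) :
    (P.lexDisjSum s).card = P.card + s.card := by
  simp [lexDisjSum, card_disjSum]

lemma Finset.exists_eq_lexDisjSum (S : Finset (α ⊕ₗ β)) : ∃ P s, S = lexDisjSum P s :=
  ⟨(S.map ofLex.toEmbedding).toLeft, (S.map ofLex.toEmbedding).toRight, by
    rw [lexDisjSum, toLeft_disjSum_toRight, map_map]
    exact map_refl.symm⟩

lemma Finset.map_sumLexMap_lexDisjSum [LinearOrder α] [LinearOrder β] [LinearOrder γ]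
    [LinearOrder δ] (f : α ↪o γ) (g : β ↪o δ) (P : Finset α) (s : Finset β) :
    (P.lexDisjSum s).map (f.sumLexMap g).toEmbedding =
      (P.map f.toEmbedding).lexDisjSum (s.map g.toEmbedding) := by
  ext x
  obtain ⟨x, rfl⟩ := toLex.surjective x
  simp [lexDisjSum, mem_disjSum]

end SumLex

lemma Finset.sum_filter_card_le_eq_sum_choose {B : Type*} [Fintype B] (n : ℕ) (f : ℕ → ℕ) :
    ∑ s ∈ univ.filter (fun s : Finset B => s.card ≤ n), f s.card =
      ∑ j ∈ range (n + 1), (Fintype.card B).choose j * f j := by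
  classical
  rw [← sum_fiberwise_of_maps_to (g := card) (t := range (n + 1))
    fun s hs => mem_range.2 (Nat.lt_succ_of_le (mem_filter.1 hs).2)]
  refine sum_congr rfl fun j hj => ?_
  have hfiber : (univ.filter fun s : Finset B => s.card ≤ n).filter (·.card = j) =
      powersetCard j univ := by
    ext s
    simp only [mem_filter, mem_univ, true_and, mem_powersetCard, subset_univ]
    exact ⟨And.right, fun h => ⟨h ▸ Nat.lt_succ_iff.1 (mem_range.1 hj), h⟩⟩
  rw [hfiber, sum_congr rfl fun s hs => by rw [(mem_powersetCard.1 hs).2], sum_const,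
    card_powersetCard, card_univ, smul_eq_mul]

theorem brdLE_sumLex {A B : Type*} [LinearOrder A] [LinearOrder B] [Fintype B] {n : ℕ}
    {T : ℕ → ℕ} (hT : ∀ j ≤ n, brdLE A j (T j)) :
    brdLE (A ⊕ₗ B) n (∑ j ∈ Finset.range (n + 1), (Fintype.card B).choose j * T (n - j)) := by
  rw [brdLE_iff_colorsOn]
  intro k hk χ
  set F := Finset.univ.filter fun s : Finset B => s.card ≤ n
  obtain ⟨e, he⟩ := exists_colorsOn_ncard_le hk F (n := fun s => n - s.card)
    (t := fun s => T (n - s.card)) (fun s _ => hT _ (Nat.sub_le _ _))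
    fun s P => χ (P.lexDisjSum s)
  let E : A ⊕ₗ B ↪o A ⊕ₗ B := e.sumLexMap (OrderIso.refl B).toOrderEmbedding
  have hsub : colorsOn χ E n ⊆
      ⋃ s ∈ F, colorsOn (fun P => χ (P.lexDisjSum s)) e (n - s.card) := by
    rintro _ ⟨S, hS, rfl⟩
    obtain ⟨P, s, rfl⟩ := S.exists_eq_lexDisjSum
    rw [mem_ofPred, Finset.card_lexDisjSum] at hS
    refine mem_biUnion (by simp [F]; omega) ⟨P, show P.card = n - s.card by omega, ?_⟩
    show χ ((P.map e.toEmbedding).lexDisjSum s) = χ ((P.lexDisjSum s).map E.toEmbedding)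
    rw [Finset.map_sumLexMap_lexDisjSum,
      show (OrderIso.refl B).toOrderEmbedding.toEmbedding = .refl B from rfl, Finset.map_refl]
  refine ⟨E, ?_⟩
  calc (colorsOn χ E n).ncard
      ≤ (⋃ s ∈ F, colorsOn (fun P => χ (P.lexDisjSum s)) e (n - s.card)).ncard :=
        ncard_le_ncard hsub (toFinite _)
    _ ≤ ∑ s ∈ F, (colorsOn (fun P => χ (P.lexDisjSum s)) e (n - s.card)).ncard :=
        F.set_ncard_biUnion_le _
    _ ≤ ∑ s ∈ F, T (n - s.card) := Finset.sum_le_sum he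
    _ = _ := Finset.sum_filter_card_le_eq_sum_choose n fun j => T (n - j)

noncomputable def Ordinal.iioSumLexFinOrderIso (α : Ordinal) (m : ℕ) :
    Iio α ⊕ₗ Fin m ≃o Iio (α + m) := by
  refine StrictMono.orderIsoOfSurjective (fun x : Iio α ⊕ₗ Fin m => Sum.elim
      (fun a : Iio α => (⟨a, (mem_Iio.1 a.2).trans_le le_self_add⟩ : Iio (α + m)))
      (fun p : Fin m => (⟨α + p, (add_lt_add_iff_left α).2 (by exact_mod_cast p.2)⟩ : Iio (α + m)))
      (ofLex x)) ?_ ?_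
  · intro x y h
    obtain ⟨x, rfl⟩ := toLex.surjective x
    obtain ⟨y, rfl⟩ := toLex.surjective y
    rcases x with a | p <;> rcases y with b | q <;>
      simp only [Sum.Lex.toLex_lt_toLex, Sum.lex_inl_inl, Sum.lex_inr_inl, Sum.lex_inr_inr,
        Sum.Lex.sep, ofLex_toLex, Sum.elim_inl, Sum.elim_inr] at h ⊢
    · exact h
    · exact (mem_Iio.1 a.2).trans_le le_self_add
    · exact (add_lt_add_iff_left α).2 (by exact_mod_cast h)
  · rintro ⟨x, hx⟩
    rcases lt_or_ge x α with hxα | hαx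
    · exact ⟨toLex (Sum.inl ⟨x, hxα⟩), rfl⟩
    · obtain ⟨d, rfl⟩ : ∃ d, x = α + d := ⟨x - α, (Ordinal.add_sub_cancel_of_le hαx).symm⟩
      have hd : d < m := (add_lt_add_iff_left α).1 hx
      obtain ⟨p, rfl⟩ := Ordinal.lt_omega0.1 (hd.trans (Ordinal.natCast_lt_omega0 m))
      exact ⟨toLex (Sum.inr ⟨p, by exact_mod_cast hd⟩), rfl⟩

theorem stmt4_general (α : Ordinal)
    (T : ℕ → ℕ) (hT0 : T 0 = 1) (hT : ∀ j : ℕ, 1 ≤ j → hasBRD ↥(Set.Iio α) j (T j))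
    (m : ℕ) :
    finiteBRD ↥(Set.Iio (α + m)) ∧
    ∀ n : ℕ, 1 ≤ n →
      brdLE ↥(Set.Iio (α + m)) n (∑ j ∈ Finset.range (n + 1), m.choose j * T (n - j)) := by
  have key : ∀ n : ℕ,
      brdLE ↥(Set.Iio (α + m)) n (∑ j ∈ Finset.range (n + 1), m.choose j * T (n - j)) := by
    intro n
    have hα : ∀ j ≤ n, brdLE (Iio α) j (T j) := by
      rintro (_ | j) -
      · rw [hT0]
        exact brdLE_zero
      · exact (hT _ j.succ_pos).1
    simpa using (brdLE_sumLex (B := Fin m) hα).of_orderIso (Ordinal.iioSumLexFinOrderIso α m)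
  exact ⟨fun n _ => ⟨_, key n⟩, fun n _ => key n⟩

/-- If a countable ordinal `α` has finite big Ramsey degrees (with `T j = T(j, α)` for
`j ≥ 1`, `T 0 = 1`), then `α + m` has finite big Ramsey degrees, and moreover
`T(n, α + m) ≤ ∑_{j=0}^n C(m,j) · T(n-j)` for every `n ≥ 1`. -/
theorem stmt4 (α : Ordinal) (hcnt : α.card ≤ Cardinal.aleph0)
    (T : ℕ → ℕ) (hT0 : T 0 = 1) (hT : ∀ j : ℕ, 1 ≤ j → hasBRD ↥(Set.Iio α) j (T j))
    (m : ℕ) (hm : 1 ≤ m) :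
    finiteBRD ↥(Set.Iio (α + m)) ∧
    ∀ n : ℕ, 1 ≤ n →
      brdLE ↥(Set.Iio (α + m)) n (∑ j ∈ Finset.range (n + 1), m.choose j * T (n - j)) :=
  stmt4_general α T hT0 hT m
end

section
/- For all integers m ≥ 1 and n ≥ 1, T(n, ω + m) = Σ_{j=0}^{n} C(m, j), where C(m, j) = 0 for m < j. In particular, if n ≥ m then T(n, ω + m) = 2^m. -/
open Set

/-! `ω + m` is `ℕ ⊕ₗ Fin m`. An `n`-element subchain consists of finitely many natural numbers
together with a set `S` of at most `n` of the `m` top points; call `S` its type. There are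
`∑_{j ≤ n} C(m, j)` types.

Every copy `U` of `ω + m` inside itself contains all top points (a strictly monotone self-map of
a well-order is inflationary, so it maps the finite final segment of top points into, hence
onto, itself) and infinitely many natural numbers, so every type occurs inside `U`: colouring
chains by their type gives the lower bound. Conversely, infinite Ramsey, applied for each type
`S` to the colouring `t ↦ χ (t ∪ S)` of the `(n - |S|)`-subsets of `ℕ`, gives an infinite
`H ⊆ ℕ` on which the colour of a chain depends only on its type, and `H` together with the top
points is again a copy of `ω + m`. -/

open Set Sum

section IterateSInf

variable (F : {B : Set ℕ // B.Infinite} → {B : Set ℕ // B.Infinite})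
  (B₀ : {B : Set ℕ // B.Infinite})

theorem sInf_iterate_mem (hF : ∀ B, (F B : Set ℕ) ⊆ B) {i j : ℕ} (hij : i ≤ j) :
    sInf (F^[j] B₀ : Set ℕ) ∈ (F^[i] B₀ : Set ℕ) := by
  have hanti : Antitone fun i => (F^[i] B₀ : Set ℕ) := by
    refine antitone_nat_of_succ_le fun i => ?_
    rw [Function.iterate_succ_apply']
    exact hF _
  exact hanti hij (Nat.sInf_mem (F^[j] B₀).2.nonempty)

theorem sInf_iterate_strictMono (hF : ∀ B, (F B : Set ℕ) ⊆ B \ {sInf (B : Set ℕ)}) :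
    StrictMono fun i => sInf (F^[i] B₀ : Set ℕ) := by
  refine strictMono_nat_of_lt_succ fun i => ?_
  have h := sInf_iterate_mem F B₀ (fun B => (hF B).trans sdiff_subset) (le_refl (i + 1))
  rw [Function.iterate_succ_apply'] at h ⊢
  obtain ⟨hin, hne⟩ := hF _ h
  exact (Nat.sInf_le hin).lt_of_ne' hne

end IterateSInf

section Ramsey

variable {κ : Type*} [Finite κ]

theorem exists_infinite_homogeneous (n : ℕ) (χ : Finset ℕ → κ) {A : Set ℕ} (hA : A.Infinite) :
    ∃ H ⊆ A, H.Infinite ∧ ∃ c, ∀ s : Finset ℕ, ↑s ⊆ H → s.card = n → χ s = c := by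
  induction n generalizing χ A with
  | zero => exact ⟨A, subset_rfl, hA, χ ∅, fun s _ hs => by rw [Finset.card_eq_zero.mp hs]⟩
  | succ n ih =>
    -- thin `B` so that the colour of `insert (sInf B) s` no longer depends on `s`
    have step : ∀ B : {B : Set ℕ // B.Infinite}, ∃ B' : {B : Set ℕ // B.Infinite},
        (B' : Set ℕ) ⊆ B \ {sInf (B : Set ℕ)} ∧ ∃ c, ∀ s : Finset ℕ, ↑s ⊆ (B' : Set ℕ) →
          s.card = n → χ (insert (sInf (B : Set ℕ)) s) = c := fun B =>
      let ⟨H, hH, hHinf, hc⟩ :=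
        ih (fun s => χ (insert (sInf (B : Set ℕ)) s)) (B.2.sdiff (finite_singleton _))
      ⟨⟨H, hHinf⟩, hH, hc⟩
    choose F hF c hc using step
    have hF' : ∀ B, (F B : Set ℕ) ⊆ B := fun B => (hF B).trans sdiff_subset
    set a := fun i => sInf (F^[i] ⟨A, hA⟩ : Set ℕ)
    have ha : StrictMono a := sInf_iterate_strictMono F ⟨A, hA⟩ hF
    obtain ⟨v, hv⟩ := Finite.exists_infinite_fiber fun i => c (F^[i] ⟨A, hA⟩)
    refine ⟨a '' _, ?_, (infinite_coe_iff.mp hv).image ha.injective.injOn, v, ?_⟩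
    · rintro _ ⟨i, -, rfl⟩
      exact sInf_iterate_mem F ⟨A, hA⟩ hF' i.zero_le
    intro s hs hcard
    have hne : s.Nonempty := Finset.card_pos.mp (by omega)
    obtain ⟨i, hiv, hi⟩ := hs (s.min'_mem hne)
    have htail : ↑(s.erase (a i)) ⊆ (F (F^[i] ⟨A, hA⟩) : Set ℕ) := by
      intro y hy
      obtain ⟨hyx, hys⟩ := Finset.mem_erase.mp hy
      obtain ⟨j, -, rfl⟩ := hs hys
      have hij : i < j := ha.lt_iff_lt.mp ((hi ▸ s.min'_le _ hys).lt_of_ne' hyx)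
      simpa only [Function.iterate_succ_apply'] using sInf_iterate_mem F ⟨A, hA⟩ hF' hij
    have := hc _ _ htail (by rw [Finset.card_erase_of_mem (hi ▸ s.min'_mem hne)]; omega)
    change χ (insert (a i) _) = _ at this
    rw [Finset.insert_erase (hi ▸ s.min'_mem hne)] at this
    exact this.trans hiv

theorem exists_infinite_homogeneous_forall {ι : Type*} [Finite ι] (r : ι → ℕ)
    (χ : ι → Finset ℕ → κ) {A : Set ℕ} (hA : A.Infinite) :
    ∃ H ⊆ A, H.Infinite ∧ ∀ i, ∃ c, ∀ s : Finset ℕ, ↑s ⊆ H → s.card = r i → χ i s = c := by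
  classical
  have := Fintype.ofFinite ι
  suffices ∀ I : Finset ι, ∃ H ⊆ A, H.Infinite ∧
      ∀ i ∈ I, ∃ c, ∀ s : Finset ℕ, ↑s ⊆ H → s.card = r i → χ i s = c by
    obtain ⟨H, hHA, hH, hc⟩ := this Finset.univ
    exact ⟨H, hHA, hH, fun i => hc i (Finset.mem_univ i)⟩
  intro I
  induction I using Finset.induction_on with
  | empty => exact ⟨A, subset_rfl, hA, by simp⟩
  | insert i I _ ih =>
    obtain ⟨H, hHA, hH, hc⟩ := ih
    obtain ⟨H', hH'H, hH', c, hc'⟩ := exists_infinite_homogeneous (r i) (χ i) hH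
    refine ⟨H', hH'H.trans hHA, hH', fun j hj => ?_⟩
    rcases Finset.mem_insert.mp hj with rfl | hj
    · exact ⟨c, hc'⟩
    · obtain ⟨c, hc⟩ := hc j hj
      exact ⟨c, fun s hs => hc s (hs.trans hH'H)⟩

end Ramsey

section Transfer

variable {C D : Type*} [LinearOrder C] [LinearOrder D]

theorem brdLE_of_orderIso (e : C ≃o D) {n t : ℕ} (h : brdLE C n t) : brdLE D n t := by
  intro k hk χ
  obtain ⟨U, ⟨eU⟩, hU⟩ := h k hk fun f => χ (f.trans e.toOrderEmbedding)
  refine ⟨e '' U, ⟨(e.strictMono.strictMonoOn U).orderIso.symm.trans (eU.trans e)⟩,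
    (ncard_le_ncard ?_ (toFinite _)).trans hU⟩
  rintro _ ⟨g, hg, rfl⟩
  refine ⟨g.trans e.symm.toOrderEmbedding, fun i => ?_, ?_⟩
  · obtain ⟨x, hx, hxg⟩ := hg i
    simpa [← hxg] using hx
  · exact congrArg χ (by ext; simp)

theorem hasBRD_congr (e : C ≃o D) {n t : ℕ} : hasBRD C n t ↔ hasBRD D n t := by
  have key : ∀ s, brdLE C n s ↔ brdLE D n s :=
    fun s => ⟨brdLE_of_orderIso e, brdLE_of_orderIso e.symm⟩
  simp only [hasBRD, key]

end Transfer

open Ordinal in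
theorem nonempty_orderIso_Iio_omega0_add (m : ℕ) :
    Nonempty (Iio (ω + (m : Ordinal.{u})) ≃o ℕ ⊕ₗ Fin m) := by
  have htype : type (Sum.Lex (α := ℕ) (β := Fin m) (· < ·) (· < ·)) = ω + m := by
    rw [type_sum_lex, type_nat_lt, type_fin]
  obtain ⟨e⟩ := (lift_type_eq.{u + 1, 0, u + 1}
    (r := (· < · : Iio (ω + (m : Ordinal.{u})) → _ → Prop))
    (s := Sum.Lex (α := ℕ) (β := Fin m) (· < ·) (· < ·))).mp (by
      rw [type_lt_Iio, htype]
      simp [lift_add, lift_natCast, lift_omega0])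
  exact ⟨OrderIso.ofRelIsoLT e⟩

instance {α β : Type*} [LT α] [LT β] [WellFoundedLT α] [WellFoundedLT β] :
    WellFoundedLT (α ⊕ₗ β) :=
  ⟨Sum.lex_wf wellFounded_lt wellFounded_lt⟩

def finsetSumLexEquiv {α β : Type*} : Finset (α ⊕ₗ β) ≃ Finset α × Finset β :=
  (Equiv.finsetCongr ofLex).trans Finset.sumEquiv.toEquiv

section FinsetSumLex

variable {α β : Type*}

@[simp]
theorem mem_finsetSumLexEquiv_fst {s : Finset (α ⊕ₗ β)} {a : α} :
    a ∈ (finsetSumLexEquiv s).1 ↔ toLex (inl a) ∈ s := by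
  simp [finsetSumLexEquiv]

@[simp]
theorem toLex_inl_mem_finsetSumLexEquiv_symm {t : Finset α} {S : Finset β} {a : α} :
    toLex (inl a) ∈ finsetSumLexEquiv.symm (t, S) ↔ a ∈ t := by
  simp [finsetSumLexEquiv]

theorem card_finsetSumLexEquiv_fst_add_snd (s : Finset (α ⊕ₗ β)) :
    (finsetSumLexEquiv s).1.card + (finsetSumLexEquiv s).2.card = s.card := by
  simp [finsetSumLexEquiv, Finset.card_toLeft_add_card_toRight]

@[simp]
theorem card_finsetSumLexEquiv_symm (t : Finset α) (S : Finset β) :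
    (finsetSumLexEquiv.symm (t, S)).card = t.card + S.card := by
  simp [finsetSumLexEquiv]

end FinsetSumLex

theorem ncard_setOf_card_le (β : Type*) [Fintype β] (n : ℕ) :
    {S : Finset β | S.card ≤ n}.ncard = ∑ j ∈ Finset.range (n + 1), (Fintype.card β).choose j := by
  rw [ncard_eq_toFinset_card', toFinset_ofPred,
    Finset.card_eq_sum_card_fiberwise (f := Finset.card) (t := Finset.range (n + 1))
      (fun S hS => by simp at hS ⊢; omega)]
  refine Finset.sum_congr rfl fun j hj => ?_
  rw [Finset.filter_filter, ← Finset.card_univ, ← Finset.card_powersetCard,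
    Finset.powersetCard_eq_filter, Finset.powerset_univ]
  congr 1
  ext S
  simp at hj ⊢
  omega

theorem sum_range_choose_of_le {m n : ℕ} (hmn : m ≤ n) :
    ∑ j ∈ Finset.range (n + 1), m.choose j = 2 ^ m := by
  rw [← Finset.sum_subset (Finset.range_subset_range.mpr (by omega : m + 1 ≤ n + 1))
    fun j _ hj => Nat.choose_eq_zero_of_lt (by simpa using hj), Nat.sum_range_choose]

section NatSumLex

variable {β : Type*} [LinearOrder β]

theorem nonempty_orderIso_of_forall_inr_mem {U : Set (ℕ ⊕ₗ β)}
    (hinr : ∀ b, toLex (inr b) ∈ U) (hinl : {p | toLex (inl p) ∈ U}.Infinite) :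
    Nonempty (U ≃o ℕ ⊕ₗ β) := by
  have := hinl.to_subtype
  set e := Nat.Subtype.orderIsoOfNat {p | toLex (inl p) ∈ U}
  let g : ℕ ⊕ₗ β → ℕ ⊕ₗ β :=
    fun x => Sum.elim (fun p => toLex (inl (e p : ℕ))) (toLex ∘ inr) (ofLex x)
  have hg : StrictMono g := by
    intro x y h
    obtain ⟨p | b, rfl⟩ := toLex.surjective x <;> obtain ⟨q | c, rfl⟩ := toLex.surjective y <;>
      simp_all [g]
  have hrange : range g = U := by
    ext x
    obtain ⟨p | b, rfl⟩ := toLex.surjective x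
    · simpa [g] using ⟨fun ⟨a, ha⟩ => ha ▸ (e a).2, fun h => ⟨e.symm ⟨p, h⟩, by simp⟩⟩
    · simp [g, hinr]
  exact ⟨((hg.orderIso g).trans (OrderIso.setCongr _ _ hrange)).symm⟩

section Finite

variable [Finite β]

theorem toLex_inr_mem_of_orderIso {U : Set (ℕ ⊕ₗ β)} (e : U ≃o ℕ ⊕ₗ β) (b : β) :
    toLex (inr b) ∈ U := by
  set f : ℕ ⊕ₗ β → ℕ ⊕ₗ β := fun x => e.symm x
  have hf : StrictMono f := (Subtype.strictMono_coe (· ∈ U)).comp e.symm.strictMono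
  have hR : MapsTo f (range (toLex ∘ inr)) (range (toLex ∘ inr)) := by
    rintro _ ⟨c, rfl⟩
    have hle := hf.id_le (toLex (inr c))
    obtain ⟨p | c', hc'⟩ := toLex.surjective (f (toLex (inr c)))
    · simp [← hc'] at hle
    · exact ⟨c', hc'⟩
  obtain ⟨x, -, hx⟩ := (((finite_range _).injOn_iff_bijOn_of_mapsTo hR).mp
    hf.injective.injOn).surjOn (⟨b, rfl⟩ : toLex (inr b) ∈ range (toLex ∘ inr))
  exact hx ▸ (e.symm x).2

theorem infinite_setOf_toLex_inl_mem_of_orderIso {U : Set (ℕ ⊕ₗ β)} (e : U ≃o ℕ ⊕ₗ β) :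
    {p | toLex (inl p) ∈ U}.Infinite := by
  have : Infinite (ℕ ⊕ₗ β) := Infinite.of_injective _ (toLex.injective.comp inl_injective)
  have hU : U.Infinite := infinite_coe_iff.mp (e.toEquiv.infinite_iff.mpr inferInstance)
  refine ((hU.sdiff (finite_range (toLex ∘ inr))).mono ?_).of_image (toLex ∘ inl)
  rintro x ⟨hxU, hx⟩
  obtain ⟨p | b, rfl⟩ := toLex.surjective x
  · exact ⟨p, hxU, rfl⟩
  · exact absurd ⟨b, rfl⟩ hx

end Finite

variable [Fintype β]

theorem brdLE_natSumLex (n : ℕ) :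
    brdLE (ℕ ⊕ₗ β) n (∑ j ∈ Finset.range (n + 1), (Fintype.card β).choose j) := by
  intro k hk χ
  let χfin : Finset (ℕ ⊕ₗ β) → Fin k :=
    fun s => if h : s.card = n then χ (s.orderEmbOfFin h) else ⟨0, by omega⟩
  obtain ⟨H, -, hH, hhom⟩ := exists_infinite_homogeneous_forall (fun S : Finset β => n - S.card)
    (fun S t => χfin (finsetSumLexEquiv.symm (t, S))) infinite_univ
  choose col hcol using hhom
  let U : Set (ℕ ⊕ₗ β) := {x | Sum.elim (· ∈ H) (fun _ => True) (ofLex x)}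
  refine ⟨U, nonempty_orderIso_of_forall_inr_mem (fun _ => trivial) hH, ?_⟩
  have hcolors : χ '' {f | ∀ i, f i ∈ U} ⊆ col '' {S | S.card ≤ n} := by
    rintro _ ⟨f, hf, rfl⟩
    set s := Finset.univ.map f.toEmbedding
    have hs : s.card = n := by simp [s]
    have hsplit := card_finsetSumLexEquiv_fst_add_snd s
    refine ⟨(finsetSumLexEquiv s).2, show _ ≤ n by omega, ?_⟩
    have hH' : ↑(finsetSumLexEquiv s).1 ⊆ H := by
      intro p hp
      obtain ⟨i, -, hi⟩ := Finset.mem_map.mp (mem_finsetSumLexEquiv_fst.mp hp)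
      have hfi : f.toEmbedding i ∈ U := hf i
      rwa [hi] at hfi
    rw [← hcol _ _ hH' (by omega), Prod.mk.eta, Equiv.symm_apply_apply]
    simp only [χfin, hs, dite_true]
    exact congrArg χ (Finset.orderEmbOfFin_unique' hs (by simp [s])).symm
  calc (χ '' {f | ∀ i, f i ∈ U}).ncard ≤ (col '' {S | S.card ≤ n}).ncard :=
        ncard_le_ncard hcolors (toFinite _)
    _ ≤ {S : Finset β | S.card ≤ n}.ncard := ncard_image_le (toFinite _)
    _ = _ := ncard_setOf_card_le β n

theorem le_of_brdLE_natSumLex {n t : ℕ} (h : brdLE (ℕ ⊕ₗ β) n t) :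
    ∑ j ∈ Finset.range (n + 1), (Fintype.card β).choose j ≤ t := by
  let enc : Finset β → Fin (Fintype.card (Finset β) + 1) :=
    fun S => Fin.castSucc (Fintype.equivFin _ S)
  have henc : Function.Injective enc :=
    (Fin.castSucc_injective _).comp (Fintype.equivFin _).injective
  have hk : 2 ≤ Fintype.card (Finset β) + 1 := by
    have := Fintype.card_pos (α := Finset β); omega
  let χ : (Fin n ↪o ℕ ⊕ₗ β) → Fin (Fintype.card (Finset β) + 1) :=
    fun f => enc (finsetSumLexEquiv (Finset.univ.map f.toEmbedding)).2
  obtain ⟨U, ⟨e⟩, hU⟩ := h _ hk χ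
  have hrealized : enc '' {S | S.card ≤ n} ⊆ χ '' {f | ∀ i, f i ∈ U} := by
    rintro _ ⟨S, hS, rfl⟩
    obtain ⟨t, htU, htcard⟩ :=
      (infinite_setOf_toLex_inl_mem_of_orderIso e).exists_subset_card_eq (n - S.card)
    set s := finsetSumLexEquiv.symm (t, S)
    have hs : s.card = n := by simp only [s, card_finsetSumLexEquiv_symm]; grind
    refine ⟨s.orderEmbOfFin hs, fun i => ?_, ?_⟩
    · have hmem := s.orderEmbOfFin_mem hs i
      obtain ⟨p | b, hx⟩ := toLex.surjective (s.orderEmbOfFin hs i)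
      · rw [← hx] at hmem ⊢
        exact htU (toLex_inl_mem_finsetSumLexEquiv_symm.mp hmem)
      · rw [← hx]
        exact toLex_inr_mem_of_orderIso e b
    · simp only [χ, s, Finset.map_orderEmbOfFin_univ, Equiv.apply_symm_apply]
  calc ∑ j ∈ Finset.range (n + 1), (Fintype.card β).choose j
        = {S : Finset β | S.card ≤ n}.ncard := (ncard_setOf_card_le β n).symm
    _ = (enc '' {S | S.card ≤ n}).ncard := (ncard_image_of_injective _ henc).symm
    _ ≤ (χ '' {f | ∀ i, f i ∈ U}).ncard := ncard_le_ncard hrealized (toFinite _)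
    _ ≤ t := hU

theorem hasBRD_natSumLex (n : ℕ) :
    hasBRD (ℕ ⊕ₗ β) n (∑ j ∈ Finset.range (n + 1), (Fintype.card β).choose j) :=
  ⟨brdLE_natSumLex n, fun _ => le_of_brdLE_natSumLex⟩

end NatSumLex

theorem stmt5_general (m n : ℕ) :
    hasBRD ↥(Set.Iio (Ordinal.omega0 + m)) n (∑ j ∈ Finset.range (n + 1), m.choose j) ∧
    (m ≤ n → ∑ j ∈ Finset.range (n + 1), m.choose j = 2 ^ m) := by
  obtain ⟨e⟩ := nonempty_orderIso_Iio_omega0_add m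
  refine ⟨(hasBRD_congr e).mpr ?_, sum_range_choose_of_le⟩
  simpa using hasBRD_natSumLex (β := Fin m) n

/-- `T(n, ω + m) = ∑_{j=0}^n C(m, j)`; in particular if `n ≥ m` this equals `2 ^ m`. -/
theorem stmt5 (m n : ℕ) (hm : 1 ≤ m) (hn : 1 ≤ n) :
    hasBRD ↥(Set.Iio (Ordinal.omega0 + m)) n (∑ j ∈ Finset.range (n + 1), m.choose j) ∧
    (m ≤ n → ∑ j ∈ Finset.range (n + 1), m.choose j = 2 ^ m) :=
  stmt5_general m n
end

section
/- Let A be a countable well-ordered set with finite big Ramsey degrees and fix integers n, m ≥ 1. For every (n, m)-multiplicative type τ, every k ≥ 2 and every coloring χ of the embeddings n ↪ A·m with multiplicative type τ, there is a subset U ⊆ A order-isomorphic to A such that χ attains at most T(r(τ), A) colors on embeddings n ↪ U·m of type τ. -/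
/-!
An embedding `n ↪ A·m` of type `τ` is determined by its levels, which `τ` fixes, and by its
values, whose order pattern `τ` also fixes; so it is determined by the `r(τ)`-element set of
its values. Embeddings of type `τ` into `U·m` thus correspond to the `r(τ)`-element subchains
of `U`, and the colouring transfers to those, where `T(r(τ), A)` bounds it.
-/

open Set

/-- The level of `f i` for an embedding `f : n ↪ A·m` (with `A·m` realized
antilexicographically as `Fin m ×ₗ A`). -/
def lvls {A : Type*} [LinearOrder A] {n m : ℕ} (f : Fin n ↪o (Fin m ×ₗ A)) (i : Fin n) :
    Fin m := (ofLex (f i)).1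

/-- The value of `f i` for an embedding `f : n ↪ A·m`. -/
def vals {A : Type*} [LinearOrder A] {n m : ℕ} (f : Fin n ↪o (Fin m ×ₗ A)) (i : Fin n) :
    A := (ofLex (f i)).2

/-- The multiplicative type of an embedding `f : n ↪ A·m`: the level of each point
(which also records the number `p_ℓ` of points on each level, since levels are monotone)
together with the total quasiorder on `Fin n` comparing values. -/
def mulTp {A : Type*} [LinearOrder A] {n m : ℕ} (f : Fin n ↪o (Fin m ×ₗ A)) :
    (Fin n → Fin m) × (Fin n → Fin n → Bool) :=
  (lvls f, fun i j => decide (vals f i ≤ vals f j))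

/-- The rank of a multiplicative type: the number of equivalence classes of the
total quasiorder `σ`. -/
noncomputable def rankTp {n : ℕ} (σ : Fin n → Fin n → Bool) : ℕ :=
  Nat.card (Quot fun i j => σ i j = true ∧ σ j i = true)


theorem exists_orderEmbedding_comp_eq {ι β A : Type*} [LinearOrder β] [LinearOrder A]
    {c : ι → β} (hc : c.Surjective) {w : ι → A} (h : ∀ i j, c i ≤ c j ↔ w i ≤ w j) :
    ∃ g : β ↪o A, g ∘ c = w := by
  refine ⟨OrderEmbedding.ofMapLEIff (w ∘ Function.surjInv hc) fun a b => ?_, funext fun i => ?_⟩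
  · simp only [Function.comp_apply, ← h, Function.surjInv_eq hc]
  · have hi := Function.surjInv_eq hc (c i)
    exact le_antisymm ((h _ i).1 hi.le) ((h i _).1 hi.ge)

theorem exists_surjective_fin_card_range {ι A : Type*} [Finite ι] [LinearOrder A] (v : ι → A) :
    ∃ c : ι → Fin (Nat.card (range v)), c.Surjective ∧ ∀ i j, c i ≤ c j ↔ v i ≤ v j := by
  have : Fintype (range v) := Fintype.ofFinite _
  let e : range v ≃o Fin (Nat.card (range v)) :=
    (Fintype.orderIsoFinOfCardEq _ Nat.card_eq_fintype_card.symm).symm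
  exact ⟨e ∘ rangeFactorization v, e.surjective.comp rangeFactorization_surjective,
    fun i j => e.le_iff_le⟩

theorem rankTp_decide_le {A : Type*} [LinearOrder A] {n : ℕ} (v : Fin n → A) :
    rankTp (fun i j => decide (v i ≤ v j)) = Nat.card (range v) := by
  rw [rankTp, ← Nat.card_congr (Setoid.quotientKerEquivRange v)]
  refine Nat.card_congr (Quot.congrRight fun i j => ?_)
  simp only [decide_eq_true_eq, ← le_antisymm_iff]
  rfl

section Levels

variable {A : Type*} [LinearOrder A] {n m : ℕ}

theorem toLex_lvls_vals (f : Fin n ↪o (Fin m ×ₗ A)) (i : Fin n) :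
    toLex (lvls f i, vals f i) = f i := rfl

theorem vals_le_iff_of_mulTp_eq {f g : Fin n ↪o (Fin m ×ₗ A)} (h : mulTp f = mulTp g)
    (i j : Fin n) : vals f i ≤ vals f j ↔ vals g i ≤ vals g j :=
  decide_eq_decide.1 (congrFun (congrFun (congrArg Prod.snd h) i) j)

def withVals (f : Fin n ↪o (Fin m ×ₗ A)) (w : Fin n → A)
    (hw : ∀ i j, w i ≤ w j ↔ vals f i ≤ vals f j) : Fin n ↪o (Fin m ×ₗ A) :=
  OrderEmbedding.ofMapLEIff (fun i => toLex (lvls f i, w i)) fun i j => by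
    rw [← f.le_iff_le, ← toLex_lvls_vals f i, ← toLex_lvls_vals f j]
    simp only [Prod.Lex.toLex_le_toLex, hw]

theorem mulTp_withVals (f : Fin n ↪o (Fin m ×ₗ A)) (w : Fin n → A)
    (hw : ∀ i j, w i ≤ w j ↔ vals f i ≤ vals f j) : mulTp (withVals f w hw) = mulTp f :=
  Prod.ext rfl (funext₂ fun i j => decide_eq_decide.2 (hw i j))

theorem withVals_eq_of_mulTp_eq {f g : Fin n ↪o (Fin m ×ₗ A)} (h : mulTp g = mulTp f)
    (w : Fin n → A) (hw : ∀ i j, w i ≤ w j ↔ vals f i ≤ vals f j) (hwg : w = vals g) :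
    withVals f w hw = g := by
  ext i : 1
  rw [← toLex_lvls_vals g, show lvls g = lvls f from congrArg Prod.fst h, ← hwg]
  rfl

end Levels

theorem stmt6_general {A : Type*} [LinearOrder A]
    (T : ℕ → ℕ) (hT : ∀ j : ℕ, 1 ≤ j → hasBRD A j (T j))
    (n m : ℕ) (hn : 1 ≤ n)
    (τ : (Fin n → Fin m) × (Fin n → Fin n → Bool))
    (hτ : ∃ f : Fin n ↪o (Fin m ×ₗ A), mulTp f = τ)
    (k : ℕ) (hk : 2 ≤ k)
    (χ : {f : Fin n ↪o (Fin m ×ₗ A) // mulTp f = τ} → Fin k) :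
    ∃ U : Set A, Nonempty (U ≃o A) ∧
      (χ '' {f | ∀ i : Fin n, vals f.1 i ∈ U}).ncard ≤ T (rankTp τ.2) := by
  obtain ⟨f₀, rfl⟩ := hτ
  obtain ⟨c, hc_surj, hc⟩ := exists_surjective_fin_card_range (vals f₀)
  have hr1 : 1 ≤ Nat.card (range (vals f₀)) :=
    have : Nonempty (range (vals f₀)) := ⟨⟨_, mem_range_self ⟨0, hn⟩⟩⟩
    Nat.card_pos
  have hpat (g : Fin _ ↪o A) i j : (g ∘ c) i ≤ (g ∘ c) j ↔ vals f₀ i ≤ vals f₀ j :=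
    g.le_iff_le.trans (hc i j)
  let F : (Fin _ ↪o A) → {f // mulTp f = mulTp f₀} := fun g =>
    ⟨withVals f₀ (g ∘ c) (hpat g), mulTp_withVals ..⟩
  obtain ⟨U, hU, hcard⟩ := (hT _ hr1).1 k hk (χ ∘ F)
  refine ⟨U, hU, ?_⟩
  rw [show rankTp (mulTp f₀).2 = _ from rankTp_decide_le (vals f₀)]
  refine (ncard_le_ncard ?_ (toFinite _)).trans hcard
  rintro _ ⟨f, hfU, rfl⟩
  obtain ⟨g, hg⟩ := exists_orderEmbedding_comp_eq hc_surj (w := vals f.1)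
    fun i j => (hc i j).trans (vals_le_iff_of_mulTp_eq f.2 i j).symm
  refine ⟨g, fun a => ?_, ?_⟩
  · obtain ⟨i, rfl⟩ := hc_surj a
    rw [← Function.comp_apply (f := g), hg]
    exact hfU i
  · exact congrArg χ (Subtype.ext (withVals_eq_of_mulTp_eq f.2 _ (hpat g) hg))

/-- Lemma on one multiplicative type: for a countable well-ordered `A` with finite big
Ramsey degrees (`T j = T(j, A)` for `j ≥ 1`), any finite coloring of the embeddings
`n ↪ A·m` of multiplicative type `τ` admits a `U ⊆ A` order-isomorphic to `A` such that
at most `T (r(τ))` colors occur on embeddings `n ↪ U·m` of type `τ`. -/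
theorem stmt6 {A : Type*} [LinearOrder A] [WellFoundedLT A] [Countable A]
    (T : ℕ → ℕ) (hT : ∀ j : ℕ, 1 ≤ j → hasBRD A j (T j))
    (n m : ℕ) (hn : 1 ≤ n) (hm : 1 ≤ m)
    (τ : (Fin n → Fin m) × (Fin n → Fin n → Bool))
    (hτ : ∃ f : Fin n ↪o (Fin m ×ₗ A), mulTp f = τ)
    (k : ℕ) (hk : 2 ≤ k)
    (χ : {f : Fin n ↪o (Fin m ×ₗ A) // mulTp f = τ} → Fin k) :
    ∃ U : Set A, Nonempty (U ≃o A) ∧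
      (χ '' {f | ∀ i : Fin n, vals f.1 i ∈ U}).ncard ≤ T (rankTp τ.2) :=
  stmt6_general T hT n m hn τ hτ k hk χ
end

section
/- Let α be a countable ordinal with finite big Ramsey degrees. For all integers s ≥ 1 and n₀, …, n_{s−1} ≥ 1 there is an integer t such that for every k ≥ 2 and every coloring χ : Emb(n₀, α) × … × Emb(n_{s−1}, α) → k there is a U ⊆ α order-isomorphic to α with |χ(Emb(n₀, U) × … × Emb(n_{s−1}, U))| ≤ t. -/
open Set

/-! Let `N ≥ n₀ + ⋯ + n_{s-1}`, with `N ≥ 1` so that `finiteBRD` applies to it. Any tuple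
`(F₀, …, F_{s-1})` of embeddings into an infinite `U ⊆ C` factors as `Fᵢ = g ∘ pᵢ` through a
single `g : Fin N ↪o C` landing in `U`, with `pᵢ : Fin nᵢ ↪o Fin N`. Colour `g` by the function
`p ↦ χ (g ∘ p)`, which takes values in a finite set; the degree bound `t` for `N`-chains gives a
copy `U` of `C` on which at most `t` such functions occur, so `χ` takes at most
`t · |∏ᵢ Emb(nᵢ, N)|` values on tuples from `U`. For finite `C` the total number of tuples is a
bound. -/

theorem Finset.exists_eq_trans_orderEmbOfFin {D : Type*} [LinearOrder D] {s : Finset D}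
    {m N : ℕ} (h : s.card = N) (f : Fin m ↪o D) (hf : ∀ j, f j ∈ s) :
    ∃ p : Fin m ↪o Fin N, f = p.trans (s.orderEmbOfFin h) := by
  refine ⟨OrderEmbedding.ofStrictMono (fun j => (s.orderIsoOfFin h).symm ⟨f j, hf j⟩)
    fun j j' hj => (s.orderIsoOfFin h).symm.strictMono (Subtype.mk_lt_mk.mpr (f.strictMono hj)),
    ?_⟩
  ext j
  change f j = s.orderEmbOfFin h ((s.orderIsoOfFin h).symm ⟨f j, hf j⟩)
  rw [← Finset.coe_orderIsoOfFin_apply, OrderIso.apply_symm_apply]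

theorem exists_orderEmbedding_fin_factorization {D : Type*} [LinearOrder D] [Infinite D]
    {ι : Type*} [Fintype ι] {n : ι → ℕ} {N : ℕ} (hN : ∑ i, n i ≤ N)
    (F : ∀ i, Fin (n i) ↪o D) :
    ∃ (g : Fin N ↪o D) (p : ∀ i, Fin (n i) ↪o Fin N), F = fun i => (p i).trans g := by
  classical
  set A := Finset.univ.biUnion fun i => Finset.univ.image (F i)
  have hA : A.card ≤ N :=
    Finset.card_biUnion_le.trans <|
      (Finset.sum_le_sum fun i _ => Finset.card_image_le.trans (by simp)).trans hN
  obtain ⟨B, hAB, hB⟩ := Infinite.exists_superset_card_eq A N hA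
  choose p hp using fun i =>
    B.exists_eq_trans_orderEmbOfFin hB (F i) fun j => hAB (by simpa [A] using ⟨i, j, rfl⟩)
  exact ⟨B.orderEmbOfFin hB, p, funext hp⟩

theorem exists_orderEmbedding_fin_factorization_of_mem {C : Type*} [LinearOrder C] {U : Set C}
    (hU : U.Infinite) {ι : Type*} [Fintype ι] {n : ι → ℕ} {N : ℕ} (hN : ∑ i, n i ≤ N)
    (F : ∀ i, Fin (n i) ↪o C) (hF : ∀ i j, F i j ∈ U) :
    ∃ g : Fin N ↪o C, (∀ j, g j ∈ U) ∧
      ∃ p : ∀ i, Fin (n i) ↪o Fin N, F = fun i => (p i).trans g := by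
  have := hU.to_subtype
  obtain ⟨g, p, hp⟩ := exists_orderEmbedding_fin_factorization hN fun i =>
    OrderEmbedding.ofStrictMono (fun j => (⟨F i j, hF i j⟩ : U)) fun _ _ h => (F i).strictMono h
  refine ⟨g.trans (OrderEmbedding.subtype _), fun j => (g j).2, p, funext fun i => ?_⟩
  ext j
  exact congrArg Subtype.val (DFunLike.congr_fun (congrFun hp i) j)

theorem brdLE.exists_ncard_image_le {C : Type*} [LinearOrder C] {n t : ℕ} (h : brdLE C n t)
    {Y : Type*} [Finite Y] (χ : (Fin n ↪o C) → Y) :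
    ∃ U : Set C, Nonempty (U ≃o C) ∧ (χ '' {f | ∀ i, f i ∈ U}).ncard ≤ t := by
  obtain ⟨m, ⟨e⟩⟩ := Finite.exists_equiv_fin Y
  let toFin : Y → Fin (max 2 m) := fun y => Fin.castLE (le_max_right 2 m) (e y)
  have htoFin : toFin.Injective := (Fin.castLE_injective _).comp e.injective
  obtain ⟨U, hU, hcard⟩ := h _ (le_max_left 2 m) (toFin ∘ χ)
  refine ⟨U, hU, ?_⟩
  rwa [Set.image_comp, Set.ncard_image_of_injective _ htoFin] at hcard

theorem brdLE.exists_ncard_image_pi_le {C : Type*} [LinearOrder C] [Infinite C] {N t : ℕ}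
    (h : brdLE C N t) {ι : Type*} [Fintype ι] {n : ι → ℕ} (hN : ∑ i, n i ≤ N)
    {Y : Type*} [Finite Y] (χ : (∀ i, Fin (n i) ↪o C) → Y) :
    ∃ U : Set C, Nonempty (U ≃o C) ∧
      (χ '' {F | ∀ i j, F i j ∈ U}).ncard ≤ t * Nat.card (∀ i, Fin (n i) ↪o Fin N) := by
  set P := ∀ i, Fin (n i) ↪o Fin N
  set χN : (Fin N ↪o C) → P → Y := fun g p => χ fun i => (p i).trans g
  obtain ⟨U, ⟨e⟩, hcard⟩ := h.exists_ncard_image_le χN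
  refine ⟨U, ⟨e⟩, ?_⟩
  have hU : U.Infinite := Set.infinite_coe_iff.mp (e.toEquiv.infinite_iff.mpr ‹_›)
  have hsub : χ '' {F | ∀ i j, F i j ∈ U} ⊆
      (fun q : (P → Y) × P => q.1 q.2) '' ((χN '' {g | ∀ j, g j ∈ U}) ×ˢ Set.univ) := by
    rintro _ ⟨F, hF, rfl⟩
    obtain ⟨g, hg, p, rfl⟩ := exists_orderEmbedding_fin_factorization_of_mem hU hN F hF
    exact ⟨(χN g, p), ⟨⟨g, hg, rfl⟩, Set.mem_univ p⟩, rfl⟩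
  calc _ ≤ _ := Set.ncard_le_ncard hsub (Set.toFinite _)
    _ ≤ _ := Set.ncard_image_le (Set.toFinite _)
    _ = _ := by rw [Set.ncard_prod, Set.ncard_univ]
    _ ≤ _ := Nat.mul_le_mul_right _ hcard

theorem exists_ncard_image_pi_le_of_finite {C : Type*} [LinearOrder C] [Finite C]
    {ι : Type*} [Finite ι] {n : ι → ℕ} {Y : Type*} (χ : (∀ i, Fin (n i) ↪o C) → Y) :
    ∃ U : Set C, Nonempty (U ≃o C) ∧
      (χ '' {F | ∀ i j, F i j ∈ U}).ncard ≤ Nat.card (∀ i, Fin (n i) ↪o C) := by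
  have := fun i => FunLike.finite (Fin (n i) ↪o C)
  exact ⟨Set.univ, ⟨OrderIso.Set.univ⟩,
    (Set.ncard_image_le (Set.toFinite _)).trans (Set.ncard_le_card _)⟩

theorem finiteBRD.exists_ncard_image_pi_le {C : Type*} [LinearOrder C] (hfin : finiteBRD C)
    {ι : Type*} [Fintype ι] (n : ι → ℕ) :
    ∃ t : ℕ, ∀ (k : ℕ) (χ : (∀ i, Fin (n i) ↪o C) → Fin k),
      ∃ U : Set C, Nonempty (U ≃o C) ∧ (χ '' {F | ∀ i j, F i j ∈ U}).ncard ≤ t := by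
  cases finite_or_infinite C with
  | inl _ => exact ⟨_, fun _ χ => exists_ncard_image_pi_le_of_finite χ⟩
  | inr _ =>
    obtain ⟨t, ht⟩ := hfin (∑ i, n i + 1) (Nat.le_add_left 1 _)
    exact ⟨_, fun _ χ => ht.exists_ncard_image_pi_le (Nat.le_succ _) χ⟩

theorem stmt8_general (α : Ordinal)
    (hfin : finiteBRD ↥(Set.Iio α))
    (s : ℕ) (nn : Fin s → ℕ) :
    ∃ t : ℕ, ∀ k : ℕ, 2 ≤ k →
      ∀ χ : (∀ i : Fin s, Fin (nn i) ↪o ↥(Set.Iio α)) → Fin k,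
        ∃ U : Set ↥(Set.Iio α), Nonempty (U ≃o ↥(Set.Iio α)) ∧
          (χ '' {F | ∀ (i : Fin s) (j : Fin (nn i)), F i j ∈ U}).ncard ≤ t := by
  obtain ⟨t, ht⟩ := hfin.exists_ncard_image_pi_le nn
  exact ⟨t, fun k _ χ => ht k χ⟩

/-- Product Ramsey theorem for a countable ordinal `α` with finite big Ramsey degrees:
there is a `t` such that every finite coloring of `Emb(n₀, α) × … × Emb(n_{s-1}, α)`
admits a `U ⊆ α` order-isomorphic to `α` on which at most `t` colors occur. -/
theorem stmt8 (α : Ordinal) (hcnt : α.card ≤ Cardinal.aleph0)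
    (hfin : finiteBRD ↥(Set.Iio α))
    (s : ℕ) (hs : 1 ≤ s) (nn : Fin s → ℕ) (hnn : ∀ i, 1 ≤ nn i) :
    ∃ t : ℕ, ∀ k : ℕ, 2 ≤ k →
      ∀ χ : (∀ i : Fin s, Fin (nn i) ↪o ↥(Set.Iio α)) → Fin k,
        ∃ U : Set ↥(Set.Iio α), Nonempty (U ≃o ↥(Set.Iio α)) ∧
          (χ '' {F | ∀ (i : Fin s) (j : Fin (nn i)), F i j ∈ U}).ncard ≤ t :=
  stmt8_general α hfin s nn
end

section
/- Fix integers n ≥ 1 and m ≥ 1. For every (n, m)-multiplicative type τ, every k ≥ 2, and every coloring χ of the embeddings n ↪ ω·m of type τ, there is an infinite U ⊆ ω such that χ is constant on the embeddings n ↪ U·m of type τ. -/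
/-!
An embedding `n ↪ ω·m` of type `τ` is determined by its set of values: its levels are prescribed
by `τ`, and its values are the elements of that set arranged according to the quasiorder of `τ`,
which is possible in only one way because `ω` is well ordered. That set has exactly `rank τ`
elements, so a colouring of the embeddings of type `τ` is a colouring of the `rank τ`-element
subsets of `ω`, and the infinite Ramsey theorem yields `U`.
-/

open Set

theorem eq_of_range_eq_of_le_iff_le {ι α : Type*} [LinearOrder α] [WellFoundedLT α]
    {u v : ι → α} (huv : ∀ i j, u i ≤ u j ↔ v i ≤ v j) (hr : range u = range v) : u = v := by
  suffices h : ∀ {u v : ι → α}, (∀ i j, u i ≤ u j ↔ v i ≤ v j) → range u = range v →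
      ∀ i, v i ≤ u i from
    funext fun i => le_antisymm (h (fun i j => (huv i j).symm) hr.symm i) (h huv hr i)
  intro u v huv hr i
  induction hi : u i using WellFoundedLT.induction generalizing i with
  | ind a ih =>
    by_contra! hlt
    obtain ⟨j, hj⟩ : u i ∈ range v := hr ▸ mem_range_self i
    rw [hi] at hj
    -- `v j = a < v i` forces `u j < u i = a`, and then `v j ≤ u j` by induction: a descent.
    have hji : u j < a := by
      rw [← hi, ← not_le, huv, not_le]
      exact hj.trans_lt hlt
    exact absurd (ih _ hji j rfl) (by rw [hj]; exact not_le.mpr hji)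

section MultiplicativeType

variable {A : Type*} [LinearOrder A] {n m : ℕ}

theorem vals_le_vals_iff (f : Fin n ↪o (Fin m ×ₗ A)) (i j : Fin n) :
    vals f i ≤ vals f j ↔ (mulTp f).2 i j = true := by
  simp [mulTp]

theorem eq_of_mulTp_eq_of_range_vals_eq [WellFoundedLT A] {f g : Fin n ↪o (Fin m ×ₗ A)}
    (htp : mulTp f = mulTp g) (hr : range (vals f) = range (vals g)) : f = g := by
  have hl : lvls f = lvls g := congrArg Prod.fst htp
  have hv : vals f = vals g :=
    eq_of_range_eq_of_le_iff_le (fun i j => by rw [vals_le_vals_iff, vals_le_vals_iff, htp]) hr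
  ext i : 1
  exact ofLex.injective (Prod.ext (congrFun hl i) (congrFun hv i))

theorem card_image_vals [DecidableEq A] (f : Fin n ↪o (Fin m ×ₗ A)) :
    (Finset.univ.image (vals f)).card = rankTp (mulTp f).2 := by
  rw [← ncard_coe_finset, Finset.coe_image, Finset.coe_univ, image_univ, ← Nat.card_coe_set_eq]
  exact (Nat.card_congr (Setoid.quotientKerEquivRange (vals f))).symm.trans <|
    Nat.card_congr <| Quot.congr (Equiv.refl _) fun i j => by
      simp [le_antisymm_iff, vals_le_vals_iff]

end MultiplicativeType

section Ramsey

variable {κ : Type*}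

def IsHomogeneous (c : Finset ℕ → κ) (r : ℕ) (U : Set ℕ) : Prop :=
  ∃ x, ∀ s : Finset ℕ, ↑s ⊆ U → s.card = r → c s = x

theorem isHomogeneous_image_of_nested {c : Finset ℕ → κ} {r : ℕ} {a : ℕ → ℕ} {T : ℕ → Set ℕ}
    {col : ℕ → κ} (ha : StrictMono a) (haT : ∀ i j, i < j → a j ∈ T i)
    (hcol : ∀ i, ∀ s : Finset ℕ, ↑s ⊆ T i → s.card = r → c (insert (a i) s) = col i)
    {I : Set ℕ} {x : κ} (hI : ∀ i ∈ I, col i = x) : IsHomogeneous c (r + 1) (a '' I) := by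
  refine ⟨x, fun s hs hcard => ?_⟩
  have hne : s.Nonempty := Finset.card_pos.mp (by omega)
  obtain ⟨i, hi, hai⟩ := hs (s.min'_mem hne)
  have hrest : ↑(s.erase (s.min' hne)) ⊆ T i := by
    intro y hy
    obtain ⟨hy, hys⟩ := Finset.mem_erase.mp hy
    obtain ⟨j, -, rfl⟩ := hs hys
    exact haT i j (ha.lt_iff_lt.mp (hai ▸ lt_of_le_of_ne (s.min'_le _ hys) (Ne.symm hy)))
  have hc := hcol i _ hrest (by rw [Finset.card_erase_of_mem (s.min'_mem hne), hcard]; rfl)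
  rw [hai, Finset.insert_erase (s.min'_mem hne)] at hc
  exact hc.trans (hI i hi)

theorem exists_infinite_isHomogeneous [Finite κ] (r : ℕ) (c : Finset ℕ → κ) {S : Set ℕ}
    (hS : S.Infinite) : ∃ U ⊆ S, U.Infinite ∧ IsHomogeneous c r U := by
  induction r generalizing c S with
  | zero => exact ⟨S, subset_rfl, hS, c ∅, fun s _ hs => by rw [Finset.card_eq_zero.mp hs]⟩
  | succ r ih =>
    have step : ∀ T : {T : Set ℕ // T.Infinite}, ∃ V : {V : Set ℕ // V.Infinite},
        V.1 ⊆ T.1 ∩ Ioi (sInf T.1) ∧ ∃ x, ∀ s : Finset ℕ, ↑s ⊆ V.1 → s.card = r →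
          c (insert (sInf T.1) s) = x := by
      rintro ⟨T, hT⟩
      obtain ⟨V, hVT, hV, hhom⟩ := ih (fun s => c (insert (sInf T) s)) (hT.sdiff (finite_Iic _))
      exact ⟨⟨V, hV⟩, fun y hy => ⟨(hVT hy).1, mem_Ioi.mpr (not_le.mp (hVT hy).2)⟩, hhom⟩
    choose next hnext col hcol using step
    let T : ℕ → {T : Set ℕ // T.Infinite} := fun i => next^[i] ⟨S, hS⟩
    let a : ℕ → ℕ := fun i => sInf (T i).1
    have hT_succ : ∀ i, T (i + 1) = next (T i) := fun i => Function.iterate_succ_apply' next i _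
    have hT_anti : Antitone fun i => (T i).1 := antitone_nat_of_succ_le fun i =>
      (hT_succ i ▸ hnext (T i)).trans inter_subset_left
    have ha_mem : ∀ i, a i ∈ (T i).1 := fun i => Nat.sInf_mem (T i).2.nonempty
    have ha : StrictMono a := strictMono_nat_of_lt_succ fun i =>
      (hnext (T i) (hT_succ i ▸ ha_mem (i + 1))).2
    obtain ⟨x, hx⟩ := Finite.exists_infinite_fiber fun i => col (T i)
    refine ⟨a '' ((fun i => col (T i)) ⁻¹' {x}), ?_,
      (infinite_coe_iff.mp hx).image ha.injective.injOn, isHomogeneous_image_of_nested ha (fun i j hij => hT_anti hij (ha_mem j))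
        (fun i s hs => hcol (T i) s (hT_succ i ▸ hs)) fun i hi => hi⟩
    rintro _ ⟨i, -, rfl⟩
    exact hT_anti (Nat.zero_le i) (ha_mem i)

theorem exists_infinite_subsingleton_image {X : Type*} [Finite κ] {φ : X → Finset ℕ}
    (hφ : φ.Injective) {r : ℕ} (hr : ∀ x, (φ x).card = r) (χ : X → κ) :
    ∃ U : Set ℕ, U.Infinite ∧ (χ '' {x | ↑(φ x) ⊆ U}).Subsingleton := by
  -- sets that are not of the form `φ x` get the extra colour `none`
  obtain ⟨U, -, hU, y, hy⟩ :=
    exists_infinite_isHomogeneous r (Function.extend φ (some ∘ χ) fun _ => none) infinite_univ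
  refine ⟨U, hU, ?_⟩
  rintro _ ⟨x, hx, rfl⟩ _ ⟨x', hx', rfl⟩
  have h := hy _ hx (hr x)
  have h' := hy _ hx' (hr x')
  rw [hφ.extend_apply] at h h'
  exact Option.some_injective _ (h.trans h'.symm)

end Ramsey

theorem stmt9_general (n m : ℕ)
    (τ : (Fin n → Fin m) × (Fin n → Fin n → Bool))
    (k : ℕ)
    (χ : {f : Fin n ↪o (Fin m ×ₗ ℕ) // mulTp f = τ} → Fin k) :
    ∃ U : Set ℕ, U.Infinite ∧
      (χ '' {f | ∀ i : Fin n, vals f.1 i ∈ U}).ncard ≤ 1 := by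
  have hinj : (fun f : {f : Fin n ↪o (Fin m ×ₗ ℕ) // mulTp f = τ} =>
      Finset.univ.image (vals f.1)).Injective := fun f g hfg =>
    Subtype.ext <| eq_of_mulTp_eq_of_range_vals_eq (f.2.trans g.2.symm) <| by
      simpa only [Finset.coe_image, Finset.coe_univ, image_univ] using Finset.coe_inj.mpr hfg
  have hcard : ∀ f : {f : Fin n ↪o (Fin m ×ₗ ℕ) // mulTp f = τ},
      (Finset.univ.image (vals f.1)).card = rankTp τ.2 := fun f =>
    (card_image_vals f.1).trans (by rw [f.2])
  obtain ⟨U, hU, hχ⟩ := exists_infinite_subsingleton_image hinj hcard χ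
  refine ⟨U, hU, ncard_le_one_iff_subsingleton.mpr (hχ.anti (image_mono fun f hf => ?_))⟩
  simpa [range_subset_iff] using hf

/-- For each `(n, m)`-multiplicative type `τ`, any finite coloring of the
embeddings `n ↪ ω·m` of type `τ` is constant on the embeddings of type `τ`
into `U·m` for some infinite `U ⊆ ω`. -/
theorem stmt9 (n m : ℕ) (hn : 1 ≤ n) (hm : 1 ≤ m)
    (τ : (Fin n → Fin m) × (Fin n → Fin n → Bool))
    (hτ : ∃ f : Fin n ↪o (Fin m ×ₗ ℕ), mulTp f = τ)
    (k : ℕ) (hk : 2 ≤ k)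
    (χ : {f : Fin n ↪o (Fin m ×ₗ ℕ) // mulTp f = τ} → Fin k) :
    ∃ U : Set ℕ, U.Infinite ∧
      (χ '' {f | ∀ i : Fin n, vals f.1 i ∈ U}).ncard ≤ 1 :=
  stmt9_general n m τ k χ
end

section
/- For all integers n ≥ 1 and m ≥ 1, the big Ramsey degree of the n-element chain in ω·m equals m^n, i.e., T(n, ω·m) = m^n. -/
open Set

/-!
Upper bound: by the infinite Ramsey theorem choose a strictly increasing `M : ℕ → ℕ` such that,
for each of the `m ^ n` level types `τ : Fin n → Fin m`, the colour of the chain with level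
type `τ` and increasing values `M ∘ w` does not depend on `w`. The points
`(ℓ, M (Nat.pair x ℓ))` form a copy of `ω·m` whose values are pairwise distinct, so each of its
`n`-chains is determined by its values and by its level type (the levels of its points listed by
increasing value); hence at most `m ^ n` colours appear on it.

Lower bound: colour each chain by its level type. A copy of `ω·m` inside `ω·m` meets every level
in an infinite set, so it contains chains of all `m ^ n` level types.
-/

theorem exists_strictMono_apply_eq {κ : Type*} [Finite κ] (D : ℕ → κ) :
    ∃ d, ∃ φ : ℕ → ℕ, StrictMono φ ∧ ∀ i, D (φ i) = d := by
  obtain ⟨d, hd⟩ := Filter.frequently_exists (p := fun d i => D i = d) |>.1 <|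
    Filter.Frequently.of_forall (f := Filter.atTop) fun i => ⟨D i, rfl⟩
  exact ⟨d, Filter.extraction_of_frequently_atTop hd⟩

theorem StrictMono.exists_strictMono_comp_eq {α β γ : Type*} [LinearOrder α] [LinearOrder β]
    [LinearOrder γ] {e : β → γ} {f : α → γ} (he : StrictMono e) (hf : StrictMono f)
    (hfe : ∀ x, f x ∈ range e) : ∃ h : α → β, StrictMono h ∧ f = e ∘ h := by
  choose h hh using hfe
  refine ⟨h, fun x y hxy => ?_, funext fun x => (hh x).symm⟩
  rw [← he.lt_iff_lt, hh, hh]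
  exact hf hxy

/-- The infinite Ramsey theorem for `n`-subsets of `ℕ`, listed increasingly. -/
theorem exists_strictMono_monochromatic {κ : Type*} [Finite κ] :
    ∀ (n : ℕ) (c : (Fin n → ℕ) → κ), ∃ M : ℕ → ℕ, StrictMono M ∧
      ∃ d, ∀ f : Fin n → ℕ, StrictMono f → c (M ∘ f) = d
  | 0, c => ⟨id, strictMono_id, c Fin.elim0, fun f _ => congrArg c (Subsingleton.elim _ _)⟩
  | n + 1, c => by
    choose M hM D hD using fun e : ℕ → ℕ =>
      exists_strictMono_monochromatic n fun t => c (Fin.cons (e 0) (e ∘ Nat.succ ∘ t))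
    -- `E (i + 1)` is the part of `E i` beyond its least point `a i` on which, with `a i` in
    -- front, the colour is the constant `D (E i)`.
    let E : ℕ → ℕ → ℕ := fun i => (fun e => e ∘ Nat.succ ∘ M e)^[i] id
    let a : ℕ → ℕ := fun i => E i 0
    have hE_succ : ∀ i, E (i + 1) = E i ∘ Nat.succ ∘ M (E i) := fun i =>
      Function.iterate_succ_apply' _ _ _
    have hE : ∀ i, StrictMono (E i) := by
      intro i
      induction i with
      | zero => exact strictMono_id
      | succ i ih =>
        rw [hE_succ]
        exact ih.comp (StrictMono.comp (fun _ _ => Nat.succ_lt_succ) (hM _))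
    have ha : StrictMono a := strictMono_nat_of_lt_succ fun i => by
      simp only [a, hE_succ, Function.comp_apply]
      exact hE i (Nat.succ_pos _)
    have hrange : Antitone fun i => range (E i) := antitone_nat_of_succ_le fun i => by
      rw [hE_succ]; exact range_comp_subset_range _ _
    have hhom : ∀ i (g : Fin n → ℕ), StrictMono g → (∀ r, i < g r) →
        c (Fin.cons (a i) (a ∘ g)) = D (E i) := by
      intro i g hg hig
      obtain ⟨h, hh, hgh⟩ := (hE (i + 1)).exists_strictMono_comp_eq (ha.comp hg)
        fun r => hrange (hig r) (mem_range_self 0)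
      rw [hgh, hE_succ]
      exact hD (E i) h hh
    obtain ⟨d, φ, hφ, hφd⟩ := exists_strictMono_apply_eq fun i => D (E i)
    refine ⟨a ∘ φ, ha.comp hφ, d, fun f hf => ?_⟩
    rw [← Fin.cons_self_tail ((a ∘ φ) ∘ f), ← hφd (f 0)]
    exact hhom _ (φ ∘ f ∘ Fin.succ) (hφ.comp (hf.comp Fin.strictMono_succ))
      fun r => hφ (hf (Fin.succ_pos r))

section Levels

variable {m : ℕ}

theorem exists_level_cofinal {s : ℕ → Fin m ×ₗ ℕ} (hs : StrictMono s) :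
    ∃ L : Fin m, ∀ x : ℕ, ∃ i, (ofLex (s i)).1 = L ∧ x < (ofLex (s i)).2 := by
  obtain ⟨i₀, hi₀⟩ := WellFoundedGT.monotone_chain_condition
    ⟨fun i => (ofLex (s i)).1, Prod.Lex.monotone_fst_ofLex.comp hs.monotone⟩
  have hlevel : ∀ i, (ofLex (s (i₀ + i))).1 = (ofLex (s i₀)).1 := fun i =>
    (hi₀ (i₀ + i) (Nat.le_add_right _ _)).symm
  have hval : StrictMono fun i => (ofLex (s (i₀ + i))).2 := fun i j hij => by
    have hlt := Prod.Lex.lt_iff.1 (hs (Nat.add_lt_add_left hij i₀))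
    rw [hlevel, hlevel] at hlt
    exact (hlt.resolve_left (lt_irrefl _)).2
  exact ⟨(ofLex (s i₀)).1, fun x => ⟨i₀ + (x + 1), hlevel _,
    Nat.lt_of_lt_of_le (Nat.lt_succ_self x) (hval.id_le (x + 1))⟩⟩

theorem infinite_setOf_toLex_mem_range {g : Fin m ×ₗ ℕ → Fin m ×ₗ ℕ} (hg : StrictMono g)
    (ℓ : Fin m) : {x : ℕ | toLex (ℓ, x) ∈ range g}.Infinite := by
  choose L hL using fun ℓ : Fin m => exists_level_cofinal (s := fun i => g (toLex (ℓ, i)))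
    (hg.comp fun _ _ hij => Prod.Lex.toLex_lt_toLex.2 (Or.inr ⟨rfl, hij⟩))
  -- The `ℓ`-th copy of `ω` ends up in level `L ℓ`; if two copies ended up in the same level,
  -- the earlier one would be cofinal in that level, hence above a point of the later one.
  have hL_inj : Function.Injective L := Function.Injective.of_lt_imp_ne fun ℓ ℓ' hlt heq => by
    obtain ⟨i', hi'L, -⟩ := hL ℓ' 0
    obtain ⟨i, hiL, hi⟩ := hL ℓ (ofLex (g (toLex (ℓ', i')))).2
    have hgt := Prod.Lex.lt_iff.1 (hg (Prod.Lex.toLex_lt_toLex.2 (Or.inl hlt) :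
      toLex (ℓ, i) < toLex (ℓ', i')))
    rw [hiL, hi'L, heq] at hgt
    exact (lt_asymm hi) (hgt.resolve_left (lt_irrefl _)).2
  obtain ⟨ℓ₀, rfl⟩ := Finite.surjective_of_injective hL_inj ℓ
  refine infinite_of_forall_exists_gt fun x => ?_
  obtain ⟨i, hiL, hi⟩ := hL ℓ₀ x
  exact ⟨_, ⟨toLex (ℓ₀, i), by rw [← hiL]; rfl⟩, hi⟩

end Levels

section Types

variable {m n : ℕ}

theorem injective_toLex_mk (τ : Fin n → Fin m) {v : Fin n → ℕ} (hv : Function.Injective v) :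
    Function.Injective fun i => toLex (τ i, v i) :=
  fun _ _ h => hv (congrArg (fun x => (ofLex x).2) h)

noncomputable def embOfPoints (τ : Fin n → Fin m) (v : Fin n → ℕ) (hv : Function.Injective v) :
    Fin n ↪o Fin m ×ₗ ℕ :=
  (Finset.univ.image fun i => toLex (τ i, v i)).orderEmbOfFin (by
    rw [Finset.card_image_of_injective _ (injective_toLex_mk τ hv), Finset.card_univ,
      Fintype.card_fin])

theorem exists_embOfPoints_eq (τ : Fin n → Fin m) {v : Fin n → ℕ} (hv : Function.Injective v)
    (j : Fin n) : ∃ i, embOfPoints τ v hv j = toLex (τ i, v i) := by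
  obtain ⟨i, -, hi⟩ := Finset.mem_image.1
    (Finset.orderEmbOfFin_mem (Finset.univ.image fun i => toLex (τ i, v i)) _ j)
  exact ⟨i, hi.symm⟩

noncomputable def levelType (f : Fin n ↪o Fin m ×ₗ ℕ) : Fin n → Fin m :=
  lvls f ∘ Tuple.sort (vals f)

noncomputable def sortedVals (f : Fin n ↪o Fin m ×ₗ ℕ) : Fin n → ℕ :=
  vals f ∘ Tuple.sort (vals f)

theorem embOfPoints_levelType_sortedVals (f : Fin n ↪o Fin m ×ₗ ℕ)
    (hf : Function.Injective (sortedVals f)) :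
    embOfPoints (levelType f) (sortedVals f) hf = f := by
  refine (Finset.orderEmbOfFin_unique' _ fun x => Finset.mem_image.2
    ⟨(Tuple.sort (vals f)).symm x, Finset.mem_univ _, ?_⟩).symm
  simp [levelType, sortedVals, lvls, vals]

theorem levelType_embOfPoints (τ : Fin n → Fin m) {v : Fin n → ℕ} (hv : StrictMono v) :
    levelType (embOfPoints τ v hv.injective) = τ := by
  choose π hπ using exists_embOfPoints_eq τ hv.injective
  set f := embOfPoints τ v hv.injective
  have hvals : vals f = v ∘ π := funext fun j => by simp only [vals, hπ]; rfl
  have hπ_inj : Function.Injective π := fun j j' h => f.injective (by rw [hπ, hπ, h])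
  set σ := Tuple.sort (vals f)
  have hπσ : StrictMono (π ∘ σ) := by
    have hsorted : StrictMono (vals f ∘ σ) := (Tuple.monotone_sort _).strictMono_of_injective
      ((hvals ▸ hv.injective.comp hπ_inj).comp σ.injective)
    intro r r' h
    simpa only [Function.comp_apply, hvals, hv.lt_iff_lt] using hsorted h
  funext r
  simp only [levelType, lvls, Function.comp_apply, hπ]
  exact congrArg τ hπσ.apply_eq

end Types

section Bounds

variable {m n : ℕ}

def spread (M : ℕ → ℕ) (p : Fin m ×ₗ ℕ) : Fin m ×ₗ ℕ :=
  toLex ((ofLex p).1, M (Nat.pair (ofLex p).2 (ofLex p).1))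

theorem strictMono_spread {M : ℕ → ℕ} (hM : StrictMono M) : StrictMono (spread (m := m) M) :=
  fun p q hpq => by
    rcases Prod.Lex.lt_iff.1 hpq with h | ⟨h, h'⟩
    · exact Prod.Lex.toLex_lt_toLex.2 (Or.inl h)
    · exact Prod.Lex.toLex_lt_toLex.2 (Or.inr ⟨h, hM (h ▸ Nat.pair_lt_pair_left _ h')⟩)

theorem exists_sortedVals_eq_comp {M : ℕ → ℕ} (hM : StrictMono M) {f : Fin n ↪o Fin m ×ₗ ℕ}
    (hf : ∀ i, f i ∈ range (spread M)) :
    Function.Injective (sortedVals f) ∧ ∃ w, StrictMono w ∧ sortedVals f = M ∘ w := by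
  choose p hp using hf
  let w : Fin n → ℕ := fun i => Nat.pair (ofLex (p i)).2 (ofLex (p i)).1
  have hvals : vals f = M ∘ w := funext fun i => by simp only [vals, ← hp]; rfl
  have hw : Function.Injective w := fun i j h => by
    obtain ⟨h₂, h₁⟩ := Nat.pair_eq_pair.1 h
    apply f.injective
    rw [← hp, ← hp]
    exact congrArg (spread M) (ofLex.injective (Prod.ext (Fin.ext h₁) h₂))
  have hinj : Function.Injective (sortedVals f) :=
    (hvals ▸ hM.injective.comp hw).comp (Tuple.sort (vals f)).injective
  refine ⟨hinj, w ∘ Tuple.sort (vals f), fun r r' h => ?_, by rw [sortedVals, hvals]; rfl⟩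
  have hsorted := (Tuple.monotone_sort (vals f)).strictMono_of_injective hinj h
  simpa only [Function.comp_apply, hvals, hM.lt_iff_lt] using hsorted

theorem brdLE_pow : brdLE (Fin m ×ₗ ℕ) n (m ^ n) := by
  intro k hk χ
  let c : (Fin n → ℕ) → (Fin n → Fin m) → Fin k := fun v τ =>
    if h : Function.Injective v then χ (embOfPoints τ v h) else ⟨0, by omega⟩
  obtain ⟨M, hM, D, hD⟩ := exists_strictMono_monochromatic n c
  refine ⟨range (spread M), ⟨(StrictMono.orderIso _ (strictMono_spread hM)).symm⟩, ?_⟩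
  have hχ : χ '' {f | ∀ i, f i ∈ range (spread M)} ⊆ range D := by
    rintro _ ⟨f, hf, rfl⟩
    obtain ⟨hinj, w, hw, hfw⟩ := exists_sortedVals_eq_comp hM hf
    refine ⟨levelType f, ?_⟩
    rw [← hD w hw, ← hfw]
    simp only [c, dif_pos hinj, embOfPoints_levelType_sortedVals]
  calc _ ≤ (range D).ncard := ncard_le_ncard hχ (toFinite _)
    _ ≤ (univ : Set (Fin n → Fin m)).ncard := by rw [← image_univ]; exact ncard_image_le
    _ = m ^ n := by simp [ncard_univ]

end Bounds

theorem exists_strictMono_forall_mem {n : ℕ} {S : Fin n → Set ℕ} (hS : ∀ r, (S r).Infinite) :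
    ∃ v : Fin n → ℕ, StrictMono v ∧ ∀ r, v r ∈ S r := by
  obtain ⟨φ, hφ, hφS⟩ := Filter.extraction_forall_of_frequently
    (P := fun r x => ∀ h : r < n, x ∈ S ⟨r, h⟩) fun r => by
      by_cases h : r < n
      · exact (Nat.frequently_atTop_iff_infinite.2 (hS ⟨r, h⟩)).mono fun x hx _ => hx
      · exact Filter.Frequently.of_forall fun x h' => absurd h' h
  exact ⟨φ ∘ Fin.val, hφ.comp Fin.val_strictMono, fun r => hφS r r.isLt⟩

theorem pow_le_of_brdLE {m n s : ℕ} (hs : brdLE (Fin m ×ₗ ℕ) n s) : m ^ n ≤ s := by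
  let encode : (Fin n → Fin m) → Fin (m ^ n + 2) := fun τ =>
    Fin.castLE (by omega) (finFunctionFinEquiv τ)
  have hencode : Function.Injective encode := fun _ _ h =>
    finFunctionFinEquiv.injective (Fin.castLE_injective _ h)
  obtain ⟨U, ⟨e⟩, hcard⟩ := hs (m ^ n + 2) (by omega) (encode ∘ levelType)
  have hmono : StrictMono fun p => (e.symm p : Fin m ×ₗ ℕ) := e.symm.strictMono
  have hrealized : range encode ⊆ (encode ∘ levelType) '' {f | ∀ i, f i ∈ U} := by
    rintro _ ⟨τ, rfl⟩
    obtain ⟨v, hv, hvU⟩ := exists_strictMono_forall_mem fun r =>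
      infinite_setOf_toLex_mem_range hmono (τ r)
    refine ⟨embOfPoints τ v hv.injective, fun j => ?_, by
      rw [Function.comp_apply, levelType_embOfPoints τ hv]⟩
    obtain ⟨i, hi⟩ := exists_embOfPoints_eq τ hv.injective j
    obtain ⟨p, hp⟩ := hvU i
    rw [hi, ← hp]
    exact (e.symm p).2
  calc m ^ n = (range encode).ncard := by
        rw [← image_univ, ncard_image_of_injective _ hencode]; simp [ncard_univ]
    _ ≤ _ := ncard_le_ncard hrealized (toFinite _)
    _ ≤ s := hcard

theorem stmt11_general (n m : ℕ) :
    hasBRD (Fin m ×ₗ ℕ) n (m ^ n) :=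
  ⟨brdLE_pow, fun _ => pow_le_of_brdLE⟩

/-- `T(n, ω·m) = m ^ n` for all `n, m ≥ 1`. -/
theorem stmt11 (n m : ℕ) (hn : 1 ≤ n) (hm : 1 ≤ m) :
    hasBRD (Fin m ×ₗ ℕ) n (m ^ n) :=
  stmt11_general n m
end

section
/- Let α₀ ≥ α₁ ≥ … ≥ α_{n−1} be ordinals such that for each i < n − 1, every remainder of αᵢ is order-isomorphic to αᵢ. Then every order-embedding of α₀ + α₁ + … + α_{n−1} into itself is the sum of order-embeddings fᵢ : αᵢ ↪ αᵢ; that is, Emb(Σᵢ αᵢ, Σᵢ αᵢ) = Σᵢ Emb(αᵢ, αᵢ). -/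
/-!
A self-embedding `w` of a well order satisfies `p ≤ w p`, so the only way it can fail to preserve
the summands is by sending some `p = (i, x)` to `q := w p` in a later summand. Because
`αᵢ - x = αᵢ`, the points `(i, x + ξ)`, `ξ < αᵢ`, form a copy of `αᵢ` inside `[p, q)`; followed
by `[q, ∞)` they lie in `[p, ∞)`, which `w` maps into `[q, ∞)`. Hence `αᵢ + T ≤ T` for the order
type `T` of `[q, ∞)`, i.e. `αᵢ * ω ≤ T`. This contradicts `T ≤ αᵢ * n`, which holds because all
summands after the `i`-th are at most `αᵢ`.
-/

open Ordinal Set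

universe u

namespace Sigma.Lex

variable {ι : Type*} {β : ι → Type*}

instance wellFoundedLT [LT ι] [WellFoundedLT ι] [∀ i, LT (β i)] [∀ i, WellFoundedLT (β i)] :
    WellFoundedLT (Σₗ i, β i) := by
  refine ⟨Subrelation.wf ?_ (InvImage.wf (fun p : Σₗ i, β i => (⟨p.1, p.2⟩ : Σ' i, β i))
    (WellFounded.psigma_lex wellFounded_lt fun _ => wellFounded_lt))⟩
  rintro _ _ (⟨_, _, h⟩ | ⟨_, _, h⟩)
  · exact PSigma.Lex.left _ _ h
  · exact PSigma.Lex.right _ h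

theorem fst_le_fst [Preorder ι] [∀ i, LE (β i)] {a b : Σₗ i, β i} (h : a ≤ b) : a.1 ≤ b.1 := by
  rcases le_def.1 h with h | ⟨h, -⟩
  exacts [h.le, h.le]

theorem toLex_mk_le_toLex_mk_iff [Preorder ι] [∀ i, LE (β i)] {i : ι} {a b : β i} :
    toLex (⟨i, a⟩ : Σ i, β i) ≤ toLex ⟨i, b⟩ ↔ a ≤ b := by
  refine ⟨fun h => ?_, fun h => Sigma.Lex.right _ _ h⟩
  rcases le_def.1 h with hi | ⟨_, hab⟩
  exacts [absurd hi (lt_irrefl i), hab]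

theorem exists_orderEmbedding_of_fst_apply_eq [Preorder ι] [∀ i, PartialOrder (β i)]
    (f : (Σₗ i, β i) ↪o Σₗ i, β i) (hf : ∀ i x, (f (toLex ⟨i, x⟩)).1 = i) :
    ∃ g : ∀ i, β i ↪o β i, ∀ i x, f (toLex ⟨i, x⟩) = toLex ⟨i, g i x⟩ := by
  have : ∀ i x, ∃ y, f (toLex ⟨i, x⟩) = toLex ⟨i, y⟩ := fun i x => by
    have h := hf i x
    revert h
    generalize f (toLex ⟨i, x⟩) = p
    obtain ⟨j, y⟩ := p
    rintro rfl
    exact ⟨y, rfl⟩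
  choose g hg using this
  refine ⟨fun i => OrderEmbedding.ofMapLEIff (g i) fun a b => ?_, hg⟩
  rw [← toLex_mk_le_toLex_mk_iff, ← hg, ← hg, f.le_iff_le, toLex_mk_le_toLex_mk_iff]

end Sigma.Lex

theorem Ordinal.mul_natCast_add_lt_mul_natCast_add {A z z' : Ordinal} {k k' : ℕ} (hk : k < k')
    (hz : z < A) : A * k + z < A * k' + z' :=
  calc A * k + z < A * (k + 1) := by rw [mul_add_one]; gcongr
    _ ≤ A * k' := by gcongr; exact_mod_cast hk
    _ ≤ A * k' + z' := le_self_add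

theorem Ordinal.not_add_le_of_le_mul_natCast {a b : Ordinal} (ha : 0 < a) (n : ℕ)
    (hb : b ≤ a * n) : ¬ a + b ≤ b := by
  rw [add_le_right_iff_mul_omega0_le]
  exact fun h => (h.trans hb).not_gt ((mul_lt_mul_iff_right₀ ha).2 (natCast_lt_omega0 n))

theorem OrderEmbedding.typeLT_add_typeLT_Ici_apply_le {β γ : Type u} [LinearOrder β]
    [WellFoundedLT β] [LinearOrder γ] [WellFoundedLT γ] (w : β ↪o β) {p : β} (e : γ ↪o β)
    (he : ∀ c, e c ∈ Ico p (w p)) :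
    typeLT γ + typeLT (Ici (w p)) ≤ typeLT (Ici (w p)) := by
  have hw : ∀ c, w p ≤ w (e c) := fun c => w.monotone (he c).1
  let f : γ ⊕ Ici (w p) → Ici (w p) :=
    Sum.elim (fun c => ⟨w (e c), hw c⟩) fun r => ⟨w r, w.strictMono.le_apply.trans' r.2⟩
  have hf : ∀ u v, Sum.Lex (· < ·) (· < ·) u v → f u < f v := by
    rintro (c | r) (c' | r') h
    · exact w.strictMono (e.strictMono (Sum.lex_inl_inl.1 h))
    · exact w.strictMono ((he c).2.trans_le r'.2)
    · exact absurd h Sum.lex_inr_inl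
    · exact w.strictMono (Sum.lex_inr_inr.1 h : r < r')
  rw [← type_sum_lex]
  exact type_le_iff'.2 ⟨RelEmbedding.ofMonotone f hf⟩

section OrdinalSum

variable {n : ℕ} {α : Fin n → Ordinal.{u}}

theorem typeLT_Ici_le_lift_mul {A : Ordinal.{u}} {q : Σₗ k : Fin n, Iio (α k)}
    (hA : ∀ k, q.1 ≤ k → α k ≤ A) : typeLT (Ici q) ≤ lift.{u + 1} (A * n) := by
  have hlt : ∀ p : Ici q, (p.1.2 : Ordinal) < A := fun p =>
    p.1.2.2.trans_le (hA _ (Sigma.Lex.fst_le_fst p.2))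
  let f : Ici q ↪o Iio (A * n) := OrderEmbedding.ofStrictMono
    (fun p => ⟨A * (p.1.1 : ℕ) + p.1.2,
      (mul_natCast_add_lt_mul_natCast_add p.1.1.isLt (hlt p)).trans_eq (add_zero _)⟩)
    fun p r h => by
      obtain ⟨⟨k, z⟩, hp⟩ := p
      obtain ⟨⟨k', z'⟩, hr⟩ := r
      have h' : (toLex ⟨k, z⟩ : Σₗ k, Iio (α k)) < toLex ⟨k', z'⟩ := h
      rcases h' with ⟨_, _, hk⟩ | ⟨_, _, hz⟩
      · exact mul_natCast_add_lt_mul_natCast_add hk (hlt _)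
      · exact add_lt_add_right (α := Ordinal) hz _
  rw [← type_lt_Iio]
  exact type_le_iff'.2 ⟨f.ltEmbedding⟩

theorem fst_apply_toLex_eq (hmono : ∀ i j : Fin n, i ≤ j → α j ≤ α i)
    (hrem : ∀ i : Fin n, (i : ℕ) < n - 1 → ∀ ξ : Ordinal, ξ < α i → α i - ξ = α i)
    (w : (Σₗ i : Fin n, Iio (α i)) ↪o Σₗ i : Fin n, Iio (α i)) (i : Fin n) (x : Iio (α i)) :
    (w (toLex ⟨i, x⟩)).1 = i := by
  refine le_antisymm (not_lt.1 fun hi => ?_)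
    (Sigma.Lex.fst_le_fst (w.strictMono.le_apply (x := toLex ⟨i, x⟩)))
  have hin : (i : ℕ) < n - 1 := by have := (w (toLex ⟨i, x⟩)).1.isLt; omega
  have hx (ξ : Iio (α i)) : x + ξ < α i := lt_sub.1 ((hrem i hin x x.2).symm ▸ ξ.2)
  let e : Iio (α i) ↪o Σₗ k : Fin n, Iio (α k) := OrderEmbedding.ofStrictMono
    (fun ξ => toLex ⟨i, ⟨x + ξ, hx ξ⟩⟩) fun ξ ξ' h =>
      Sigma.Lex.right _ _ (add_lt_add_right (α := Ordinal) h _)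
  have he : ∀ ξ, e ξ ∈ Ico (toLex ⟨i, x⟩) (w (toLex ⟨i, x⟩)) := fun ξ =>
    ⟨Sigma.Lex.right _ _ (le_self_add (a := (x : Ordinal))), Sigma.Lex.left _ _ hi⟩
  have hsum := w.typeLT_add_typeLT_Ici_apply_le e he
  have hbound := typeLT_Ici_le_lift_mul fun k hk => hmono i k (hi.le.trans hk)
  rw [type_lt_Iio] at hsum
  rw [lift_mul, lift_natCast] at hbound
  have hα : 0 < α i := zero_le.trans_lt x.2
  exact not_add_le_of_le_mul_natCast (lift_zero ▸ lift_lt.2 hα) n hbound hsum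

end OrdinalSum

/-- Emb(Σᵢ αᵢ, Σᵢ αᵢ) = Σᵢ Emb(αᵢ, αᵢ): if `α₀ ≥ α₁ ≥ … ≥ α_{n-1}` are ordinals such that
for each `i < n - 1` every remainder of `αᵢ` is order-isomorphic to `αᵢ`, then every
order-embedding of the lexicographic sum `Σᵢ αᵢ` into itself preserves the summands,
i.e. it is a sum of self-embeddings `gᵢ : αᵢ ↪o αᵢ`. -/
theorem stmt15 (n : ℕ) (α : Fin n → Ordinal)
    (hmono : ∀ i j : Fin n, i ≤ j → α j ≤ α i)
    (hrem : ∀ i : Fin n, (i : ℕ) < n - 1 → ∀ ξ : Ordinal, ξ < α i → α i - ξ = α i)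
    (w : (Σₗ i : Fin n, ↥(Set.Iio (α i))) ↪o (Σₗ i : Fin n, ↥(Set.Iio (α i)))) :
    ∃ g : ∀ i : Fin n, ↥(Set.Iio (α i)) ↪o ↥(Set.Iio (α i)),
      ∀ (i : Fin n) (x : ↥(Set.Iio (α i))), w (toLex ⟨i, x⟩) = toLex ⟨i, g i x⟩ :=
  Sigma.Lex.exists_orderEmbedding_of_fst_apply_eq w (fst_apply_toLex_eq hmono hrem w)
end

section
/- Let α₀ ≥ α₁ ≥ … ≥ α_{ℓ−1} be ordinals such that for each i < ℓ − 1 every remainder of αᵢ is order-isomorphic to αᵢ. If α₀ + α₁ + … + α_{ℓ−1} has finite big Ramsey degrees, then for all m ≥ 1 and all 0 ≤ j₀ < j₁ < … < j_{m−1} ≤ ℓ−1, the subsum α_{j₀} + α_{j₁} + … + α_{j_{m−1}} has finite big Ramsey degrees, and indeed T(n, subsum) ≤ T(n, full sum) for all n ≥ 1. -/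
open Set

/-!
Transport a colouring of the `n`-chains of the subsum `S` to the full sum `C` along the canonical
embedding `S ↪ C`, and take a copy `U ⊆ C` of `C` carrying at most `t` colours. The fibres of `U`
over the summands `Iio αᵢ` have order types at most `αᵢ` that still add up to `α₀ + ⋯ + α_{ℓ-1}`.
Since the `αᵢ` decrease and all but the last are additively principal, lowering one summand strictly
lowers the sum, so every fibre has order type exactly `αᵢ`. Isomorphisms `αᵢ ≃ fibreᵢ` for the
summands used by `S` give a copy of `S` inside `S` that `S ↪ C` maps into `U`, and on it the
colouring takes at most `t` values.
-/

open Ordinal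

universe u v

namespace Ordinal

theorem list_sum_lt_add_list_sum {β : Ordinal} (hβ : 0 < β) {L : List Ordinal}
    (hL : ∀ x ∈ L, x ≤ β) : L.sum < β + L.sum := by
  have hbound : L.sum < β * ω :=
    calc L.sum ≤ β * L.length := by
          simpa only [nsmul_eq_mul] using List.sum_le_card_nsmul L β hL
      _ < β * ω := (mul_lt_mul_iff_right₀ hβ).2 (natCast_lt_omega0 _)
  refine le_add_self.lt_of_ne fun h => ?_
  exact hbound.not_ge (add_eq_right_iff_mul_omega0_le.1 h.symm)

theorem IsPrincipal.add_lt_add_right {β t x : Ordinal} (hβ : IsPrincipal (· + ·) β) (ht : t < β)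
    (hx : x < β + x) : t + x < β + x := by
  rcases le_or_gt β x with hβx | hxβ
  · rwa [hβ.add_eq_right_of_le ht hβx]
  · exact (hβ ht hxβ).trans_le le_self_add

theorem sum_ofFn_lt_sum_ofFn {l : ℕ} {β t : Fin l → Ordinal} (hanti : Antitone β)
    (hprin : ∀ i : Fin l, (i : ℕ) < l - 1 → IsPrincipal (· + ·) (β i)) (hle : t ≤ β)
    {i₀ : Fin l} (hlt : t i₀ < β i₀) : (List.ofFn t).sum < (List.ofFn β).sum := by
  induction l with
  | zero => exact i₀.elim0
  | succ l ih =>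
    simp only [List.ofFn_succ, List.sum_cons]
    induction i₀ using Fin.cases with
    | zero =>
      have htail : (List.ofFn fun i : Fin l => t i.succ).sum
          ≤ (List.ofFn fun i : Fin l => β i.succ).sum := by
        simpa only [List.ofFn_eq_map] using List.sum_le_sum fun i _ => hle (Fin.succ i)
      calc t 0 + (List.ofFn fun i : Fin l => t i.succ).sum
          ≤ t 0 + (List.ofFn fun i : Fin l => β i.succ).sum := by gcongr
        _ < β 0 + (List.ofFn fun i : Fin l => β i.succ).sum := by
          rcases l with _ | l
          · simpa using hlt
          -- `β 0` absorbs `t 0`, but a finite sum of terms `≤ β 0` cannot absorb `β 0`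
          · refine (hprin 0 (by simp)).add_lt_add_right hlt
              (list_sum_lt_add_list_sum (pos_of_gt hlt) ?_)
            exact List.forall_mem_ofFn_iff.2 fun i => hanti (Fin.zero_le _)
    | succ k =>
      calc t 0 + (List.ofFn fun i : Fin l => t i.succ).sum
          ≤ β 0 + (List.ofFn fun i : Fin l => t i.succ).sum := by gcongr; exact hle 0
        _ < β 0 + (List.ofFn fun i : Fin l => β i.succ).sum := by
          gcongr
          exact ih (fun i j h => hanti (Fin.succ_le_succ_iff.2 h))
            (fun i hi => hprin i.succ (by rw [Fin.val_succ]; omega)) (fun i => hle i.succ) hlt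

theorem isPrincipal_add_of_sub_eq_self {o : Ordinal} (h : ∀ ξ < o, o - ξ = o) :
    IsPrincipal (· + ·) o :=
  isPrincipal_add_iff_add_left_eq_self.2 fun ξ hξ => by
    conv_rhs => rw [← Ordinal.add_sub_cancel_of_le hξ.le, h ξ hξ]

theorem isPrincipal_add_lift {o : Ordinal.{u}} (ho : IsPrincipal (· + ·) o) :
    IsPrincipal (· + ·) (lift.{v} o) := by
  refine isPrincipal_add_iff_add_left_eq_self.2 fun a ha => ?_
  obtain ⟨ξ, hξ, rfl⟩ := lt_lift_iff.1 ha
  rw [← Ordinal.lift_add, ho.add_eq_right hξ]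

end Ordinal

instance Sigma.Lex.wellFoundedLT_s16 {ι : Type*} {X : ι → Type*} [Preorder ι] [WellFoundedLT ι]
    [∀ i, Preorder (X i)] [∀ i, WellFoundedLT (X i)] : WellFoundedLT (Σₗ i, X i) := by
  refine ⟨((WellFounded.psigma_lex wellFounded_lt fun i => (wellFounded_lt (α := X i))).onFun
    (f := fun a : Σₗ i, X i => (⟨(ofLex a).1, (ofLex a).2⟩ : Σ' i, X i))).mono ?_⟩
  rintro ⟨i, x⟩ ⟨k, y⟩ h
  cases h with
  | left _ _ hik => exact PSigma.Lex.left _ _ hik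
  | right _ _ hxy => exact PSigma.Lex.right _ hxy

def OrderEmbedding.sigmaLexMap {ι κ : Type*} [LinearOrder ι] [Preorder κ] {X : ι → Type*}
    {Y : κ → Type*} [∀ i, LinearOrder (X i)] [∀ k, Preorder (Y k)]
    (j : ι ↪o κ) (f : ∀ i, X i ↪o Y (j i)) : (Σₗ i, X i) ↪o Σₗ k, Y k :=
  OrderEmbedding.ofStrictMono (fun a => toLex ⟨j (ofLex a).1, f _ (ofLex a).2⟩) <| by
    rintro ⟨i, x⟩ ⟨k, y⟩ h
    cases h with
    | left _ _ hik => exact Sigma.Lex.left _ _ (j.strictMono hik)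
    | right _ _ hxy => exact Sigma.Lex.right _ _ ((f i).strictMono hxy)

theorem Ordinal.type_sigmaLex_fin_succ {l : ℕ} (X : Fin (l + 1) → Type*)
    [∀ i, LinearOrder (X i)] [∀ i, WellFoundedLT (X i)] :
    typeLT (Σₗ i, X i) = typeLT (X 0) + typeLT (Σₗ i : Fin l, X i.succ) := by
  let g : X 0 ⊕ (Σₗ i : Fin l, X i.succ) → Σₗ i, X i :=
    Sum.elim (fun x => toLex ⟨0, x⟩) (fun a => toLex ⟨(ofLex a).1.succ, (ofLex a).2⟩)
  have hg : ∀ a b, Sum.Lex (· < ·) (· < ·) a b → g a < g b := by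
    intro a b h
    cases h with
    | inl h => exact Sigma.Lex.right _ _ h
    | inr h =>
      cases h with
      | left _ _ hik => exact Sigma.Lex.left _ _ (Fin.succ_lt_succ_iff.2 hik)
      | right _ _ hxy => exact Sigma.Lex.right _ _ hxy
    | sep => exact Sigma.Lex.left _ _ (Fin.succ_pos _)
  have hsurj : Function.Surjective g := by
    rintro ⟨i, x⟩
    induction i using Fin.cases with
    | zero => exact ⟨Sum.inl x, rfl⟩
    | succ k => exact ⟨Sum.inr (toLex ⟨k, x⟩), rfl⟩
  rw [← type_sum_lex]
  exact (RelIso.ofSurjective (RelEmbedding.ofMonotone g hg) hsurj).ordinalType_congr.symm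

theorem Ordinal.type_sigmaLex_fin {l : ℕ} (X : Fin l → Type*)
    [∀ i, LinearOrder (X i)] [∀ i, WellFoundedLT (X i)] :
    typeLT (Σₗ i, X i) = (List.ofFn fun i => typeLT (X i)).sum := by
  induction l with
  | zero =>
    rw [List.ofFn_zero, List.sum_nil]
    exact type_eq_zero_iff_isEmpty.2 ⟨fun a => (ofLex a).1.elim0⟩
  | succ l ih => rw [type_sigmaLex_fin_succ, ih, List.ofFn_succ, List.sum_cons]

theorem Ordinal.nonempty_orderIso_fiber {l : ℕ} {X : Fin l → Type*} [∀ i, LinearOrder (X i)]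
    [∀ i, WellFoundedLT (X i)] (hanti : Antitone fun i => typeLT (X i))
    (hprin : ∀ i : Fin l, (i : ℕ) < l - 1 → IsPrincipal (· + ·) (typeLT (X i)))
    {U : Set (Σₗ i, X i)} (hU : Nonempty (U ≃o Σₗ i, X i)) (i : Fin l) :
    Nonempty (X i ≃o {x : X i | toLex ⟨i, x⟩ ∈ U}) := by
  let A : ∀ i, Set (X i) := fun i => {x | toLex ⟨i, x⟩ ∈ U}
  let incl := OrderEmbedding.sigmaLexMap (OrderIso.refl (Fin l)).toOrderEmbedding
    fun i => OrderEmbedding.subtype (· ∈ A i)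
  have hrange : Set.range incl = U := by
    ext c
    refine ⟨?_, fun hc => ⟨toLex ⟨(ofLex c).1, (ofLex c).2, hc⟩, rfl⟩⟩
    rintro ⟨a, rfl⟩
    exact (ofLex a).2.2
  have hsum : (List.ofFn fun i => typeLT (A i)).sum = (List.ofFn fun i => typeLT (X i)).sum := by
    rw [← type_sigmaLex_fin, ← type_sigmaLex_fin]
    exact (OrderEmbedding.orderIso.trans
      ((OrderIso.setCongr _ _ hrange).trans hU.some)).ordinalType_congr
  have hle : ∀ i, typeLT (A i) ≤ typeLT (X i) := fun i =>
    (OrderEmbedding.subtype (· ∈ A i)).ltEmbedding.ordinal_type_le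
  have heq : typeLT (A i) = typeLT (X i) :=
    (hle i).eq_of_not_lt fun hlt => (sum_ofFn_lt_sum_ofFn hanti hprin hle hlt).ne hsum
  exact ⟨(OrderIso.ofRelIsoLT (type_eq.1 heq).some).symm⟩

theorem brdLE_of_orderEmbedding {S C : Type*} [LinearOrder S] [LinearOrder C] (ι : S ↪o C)
    (hι : ∀ U : Set C, Nonempty (U ≃o C) → ∃ ρ : S ↪o S, ∀ s, ι (ρ s) ∈ U) {n t : ℕ}
    (hC : brdLE C n t) : brdLE S n t := by
  intro k hk χ
  have hinj : Function.Injective fun g : Fin n ↪o S => g.trans ι := fun g g' h =>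
    DFunLike.ext _ _ fun x => ι.injective (DFunLike.congr_fun h x)
  -- chains of `C` that do not come from `S` get the junk colour `0`
  let χ' := Function.extend (fun g : Fin n ↪o S => g.trans ι) χ fun _ => ⟨0, by omega⟩
  obtain ⟨U, hU, hcard⟩ := hC k hk χ'
  obtain ⟨ρ, hρ⟩ := hι U hU
  refine ⟨Set.range ρ, ⟨(OrderEmbedding.orderIso (f := ρ)).symm⟩,
    le_trans (Set.ncard_le_ncard ?_ (Set.toFinite _)) hcard⟩
  rintro _ ⟨g, hg, rfl⟩
  refine ⟨g.trans ι, fun x => ?_, hinj.extend_apply _ _ g⟩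
  obtain ⟨s, hs⟩ := hg x
  simpa [← hs] using hρ s

theorem stmt16_general (l : ℕ) (α : Fin l → Ordinal)
    (hmono : ∀ i j : Fin l, i ≤ j → α j ≤ α i)
    (hrem : ∀ i : Fin l, (i : ℕ) < l - 1 → ∀ ξ : Ordinal, ξ < α i → α i - ξ = α i)
    (hfin : finiteBRD (Σₗ i : Fin l, ↥(Set.Iio (α i))))
    (m : ℕ) (j : Fin m ↪o Fin l) :
    finiteBRD (Σₗ i : Fin m, ↥(Set.Iio (α (j i)))) ∧
    ∀ n : ℕ, 1 ≤ n → ∀ t : ℕ,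
      brdLE (Σₗ i : Fin l, ↥(Set.Iio (α i))) n t →
      brdLE (Σₗ i : Fin m, ↥(Set.Iio (α (j i)))) n t := by
  have hanti : Antitone fun i => typeLT (Iio (α i)) := fun i i' h => by
    simpa only [type_lt_Iio, lift_le] using hmono i i' h
  have hprin : ∀ i : Fin l, (i : ℕ) < l - 1 → IsPrincipal (· + ·) (typeLT (Iio (α i))) :=
    fun i hi => type_lt_Iio (α i) ▸
      isPrincipal_add_lift (isPrincipal_add_of_sub_eq_self (hrem i hi))
  have key : ∀ {n t}, brdLE (Σₗ i : Fin l, ↥(Set.Iio (α i))) n t →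
      brdLE (Σₗ i : Fin m, ↥(Set.Iio (α (j i)))) n t := by
    refine brdLE_of_orderEmbedding (j.sigmaLexMap fun i => (OrderIso.refl _).toOrderEmbedding)
      fun U hU => ?_
    let φ i := (nonempty_orderIso_fiber hanti hprin hU (j i)).some
    exact ⟨(OrderIso.refl _).toOrderEmbedding.sigmaLexMap fun i =>
      (φ i).toOrderEmbedding.trans (OrderEmbedding.subtype _), fun s => (φ _ (ofLex s).2).2⟩
  exact ⟨fun n hn => (hfin n hn).imp fun _ => key, fun _ _ _ => key⟩

/-- Passing to a subsum: if `α₀ ≥ … ≥ α_{ℓ-1}` are ordinals, each `αᵢ` with `i < ℓ - 1`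
having all remainders order-isomorphic to itself, and the lexicographic sum `Σᵢ αᵢ` has
finite big Ramsey degrees, then every subsum `α_{j₀} + … + α_{j_{m-1}}` has finite big
Ramsey degrees, with `T(n, subsum) ≤ T(n, full sum)` for all `n ≥ 1`. -/
theorem stmt16 (l : ℕ) (α : Fin l → Ordinal)
    (hmono : ∀ i j : Fin l, i ≤ j → α j ≤ α i)
    (hrem : ∀ i : Fin l, (i : ℕ) < l - 1 → ∀ ξ : Ordinal, ξ < α i → α i - ξ = α i)
    (hfin : finiteBRD (Σₗ i : Fin l, ↥(Set.Iio (α i))))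
    (m : ℕ) (hm : 1 ≤ m) (j : Fin m ↪o Fin l) :
    finiteBRD (Σₗ i : Fin m, ↥(Set.Iio (α (j i)))) ∧
    ∀ n : ℕ, 1 ≤ n → ∀ t : ℕ,
      brdLE (Σₗ i : Fin l, ↥(Set.Iio (α i))) n t →
      brdLE (Σₗ i : Fin m, ↥(Set.Iio (α (j i)))) n t :=
  stmt16_general l α hmono hrem hfin m j
end
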